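/- arXiv:2111.06651 — 7 statements merged into one kernel-verified Lean document; each statement's English description precedes it below -/
import Mathlib

section
/- Let E ⊆ ℕ with d̄(E) > 0. Then there exist an infinite subset 𝔫 ⊆ ℕ and a set F ⊆ ℕ with ∂F ⊆ E such that: (i) the sequences d_n(F_(n)) and d_n((E∩F)_(n)) converge along n ∈ 𝔫, the second limit equals d̄(E), and the first limit is ≥ d̄(E); (ii) limsup_{𝔫∋n} d_n((∂F)_(n)) = 0 (F is Følner along 𝔫); (iii) lim_{M→∞} limsup_{𝔫∋n} d_n((F∖E_M)_(n)) = 0 (E is dense in F along 𝔫). -/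
open Filter

/-- `dens E n = #(E ∩ {1,…,n}) / n`, the frequency of `E` in `⟦1,n⟧`. -/
noncomputable def dens (E : Set ℕ) (n : ℕ) : ℝ := ((E ∩ Set.Icc 1 n).ncard : ℝ) / n

/-- Upper asymptotic density of a set of natural numbers. -/
noncomputable def upperDensity (E : Set ℕ) : ℝ := limsup (fun n => dens E n) atTop

/-- Boundary of a set of integers: elements `n ∈ E` with `n-1 ∉ E` or `n+1 ∉ E`. -/
def natBd (E : Set ℕ) : Set ℕ := {n | n ∈ E ∧ ((n - 1) ∉ E ∨ (n + 1) ∉ E)}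

/-- `thick E M` = `E_M`: union of all integer intervals `⟦a,b⟧` with `a,b ∈ E`, `b - a ≤ M`. -/
def thick (E : Set ℕ) (M : ℕ) : Set ℕ :=
  {k | ∃ a b, a ∈ E ∧ b ∈ E ∧ b ≤ a + M ∧ a ≤ k ∧ k ≤ b}


/-!
Realize `d̄(E)` along a sequence `m` such that, for every `M`, the density of `E_M` along `m`
also converges, to some `α M`; `α` increases to a limit `A`. Thin `m` to a lacunary sequence
`n` (`n k / n (k + 1) → 0`) on which `d(E_{k+1})` at `n (k + 1)` is at most `A + 1/(k+1)`.
Let `F` be `E` with every gap of length at most `j + 1` filled inside the block `(n j, n (j+1)]`.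
Then `∂F ⊆ E`; `F` contains `E` beyond `n 0`; in each block, left (right) endpoints of `F` are
`(j + 2)`-separated, so `∂F` is sparse; and up to `n (k + 1)`, `F \ E_M` lies in
`[1, n k] ∪ (E_{k+1} \ E_M)`, of density at most about `A - α M`. A final subsequence makes
`d(F)` converge.
-/

open Set Topology

lemma dens_nonneg (A : Set ℕ) (n : ℕ) : 0 ≤ dens A n := by
  unfold dens; positivity

lemma dens_le_ncard_div {A : Set ℕ} (hA : A.Finite) (n : ℕ) : dens A n ≤ A.ncard / n := by
  unfold dens
  gcongr
  exact inter_subset_left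

lemma dens_le_one (A : Set ℕ) (n : ℕ) : dens A n ≤ 1 := by
  rcases Nat.eq_zero_or_pos n with rfl | hn
  · simp [dens]
  · rw [dens, div_le_one (by exact_mod_cast hn)]
    exact_mod_cast (ncard_le_ncard inter_subset_right (finite_Icc 1 n)).trans_eq (by simp)

lemma dens_mem_Icc (A : Set ℕ) (n : ℕ) : dens A n ∈ Icc (0 : ℝ) 1 :=
  ⟨dens_nonneg A n, dens_le_one A n⟩

lemma dens_le_dens_of_inter_subset {A B : Set ℕ} {n : ℕ} (h : A ∩ Icc 1 n ⊆ B) :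
    dens A n ≤ dens B n := by
  unfold dens
  gcongr (?_ : ℝ) / _
  exact_mod_cast ncard_le_ncard (subset_inter h inter_subset_right)
    ((finite_Icc 1 n).inter_of_right B)

lemma dens_mono {A B : Set ℕ} (h : A ⊆ B) (n : ℕ) : dens A n ≤ dens B n :=
  dens_le_dens_of_inter_subset (inter_subset_left.trans h)

lemma dens_union_le (A B : Set ℕ) (n : ℕ) : dens (A ∪ B) n ≤ dens A n + dens B n := by
  unfold dens
  rw [← add_div, union_inter_distrib_right]
  gcongr
  exact_mod_cast ncard_union_le _ _

lemma dens_diff_add_dens {A B : Set ℕ} (h : B ⊆ A) (n : ℕ) :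
    dens (A \ B) n + dens B n = dens A n := by
  unfold dens
  rw [← add_div, inter_sdiff_distrib_right]
  congr 1
  exact_mod_cast ncard_sdiff_add_ncard_of_subset (inter_subset_inter_left _ h)
    ((finite_Icc 1 n).inter_of_right A)

lemma dens_Iic_le (a n : ℕ) : dens (Iic a) n ≤ a / n := by
  unfold dens
  gcongr
  calc (Iic a ∩ Icc 1 n).ncard ≤ (Icc 1 a).ncard :=
        ncard_le_ncard (fun x hx => ⟨hx.2.1, hx.1⟩) (finite_Icc 1 a)
    _ = a := by simp

lemma isBoundedUnder_le_dens {ι : Type*} (l : Filter ι) (A : Set ℕ) (v : ι → ℕ) :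
    IsBoundedUnder (· ≤ ·) l fun i => dens A (v i) :=
  isBoundedUnder_of ⟨1, fun _ => dens_le_one _ _⟩

lemma isCoboundedUnder_le_dens {ι : Type*} (l : Filter ι) [l.NeBot] (A : Set ℕ) (v : ι → ℕ) :
    IsCoboundedUnder (· ≤ ·) l fun i => dens A (v i) :=
  isCoboundedUnder_le_of_le l fun _ => dens_nonneg _ _

lemma limsup_le_of_eventually_le_of_tendsto {ι : Type*} {l : Filter ι} [l.NeBot] {u b : ι → ℝ}
    {c : ℝ} (hu : IsCoboundedUnder (· ≤ ·) l u) (h : ∀ᶠ i in l, u i ≤ b i)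
    (hb : Tendsto b l (𝓝 c)) : limsup u l ≤ c :=
  (limsup_le_limsup h hu hb.isBoundedUnder_le).trans_eq hb.limsup_eq

lemma natCast_div_add_one_div_le (N d : ℕ) : (((N / d : ℕ) : ℝ) + 1) / N ≤ 1 / d + 1 / N := by
  rcases N.eq_zero_or_pos with rfl | hN
  · simp only [Nat.cast_zero, div_zero]
    positivity
  rw [add_div]
  refine add_le_add_left ?_ _
  calc ((N / d : ℕ) : ℝ) / N ≤ (N / d : ℝ) / N := by gcongr; exact Nat.cast_div_le
    _ = 1 / d := by field_simp

lemma thick_mono (E : Set ℕ) {M M' : ℕ} (h : M ≤ M') : thick E M ⊆ thick E M' :=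
  fun _ ⟨a, b, ha, hb, hab, hax, hxb⟩ => ⟨a, b, ha, hb, by omega, hax, hxb⟩

lemma ncard_le_div_add_one_of_separated {S : Set ℕ} {q d : ℕ} (hd : 0 < d)
    (hS : ∀ x ∈ S, x ≤ q) (hsep : ∀ x ∈ S, ∀ y ∈ S, x < y → x + d ≤ y) :
    S.ncard ≤ q / d + 1 := by
  have hmono : StrictMonoOn (· / d) S := fun x hx y hy hxy =>
    calc x / d < x / d + 1 := Nat.lt_succ_self _
      _ = (x + d) / d := (Nat.add_div_right x hd).symm
      _ ≤ y / d := Nat.div_le_div_right (hsep x hx y hy hxy)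
  calc S.ncard ≤ (Iic (q / d)).ncard :=
        ncard_le_ncard_of_injOn _ (fun x hx => Nat.div_le_div_right (hS x hx)) hmono.injOn
          (finite_Iic _)
    _ = q / d + 1 := ncard_Iic_nat _

lemma StrictMono.exists_mem_Ioc {n : ℕ → ℕ} (hn : StrictMono n) {x : ℕ} (hx : n 0 < x) :
    ∃ j, x ∈ Ioc (n j) (n (j + 1)) := by
  have hcover := iUnion_Ioc_map_succ_eq_Ioi (fun _ => hn.monotone bot_le)
    hn.not_bddAbove_range_of_wellFoundedLT
  have hx' : x ∈ Ioi (n ⊥) := hx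
  rw [← hcover] at hx'
  simpa using hx'

lemma Monotone.eq_of_mem_Ioc {n : ℕ → ℕ} (hn : Monotone n) {i j x : ℕ}
    (hi : x ∈ Ioc (n i) (n (i + 1))) (hj : x ∈ Ioc (n j) (n (j + 1))) : i = j := by
  by_contra hij
  exact (hn.pairwise_disjoint_on_Ioc_succ hij).le_bot ⟨by simpa using hi, by simpa using hj⟩

def blockFill (E : Set ℕ) (n : ℕ → ℕ) : Set ℕ :=
  {x | ∃ j a b, a ∈ E ∧ b ∈ E ∧ b ≤ a + (j + 1) ∧ n j < a ∧ b ≤ n (j + 1) ∧ a ≤ x ∧ x ≤ b}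

section BlockFill

variable {E : Set ℕ} {n : ℕ → ℕ}

lemma mem_of_mem_blockFill_of_succ_notMem {x : ℕ} (hx : x ∈ blockFill E n)
    (hx' : x + 1 ∉ blockFill E n) : x ∈ E := by
  obtain ⟨j, a, b, ha, hb, hab, hja, hbj, hax, hxb⟩ := hx
  obtain rfl : x = b := by
    by_contra hne
    exact hx' ⟨j, a, b, ha, hb, hab, hja, hbj, by omega, by omega⟩
  exact hb

lemma mem_of_mem_blockFill_of_pred_notMem {x : ℕ} (hx : x ∈ blockFill E n)
    (hx' : x - 1 ∉ blockFill E n) : x ∈ E := by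
  obtain ⟨j, a, b, ha, hb, hab, hja, hbj, hax, hxb⟩ := hx
  obtain rfl : x = a := by
    by_contra hne
    exact hx' ⟨j, a, b, ha, hb, hab, hja, hbj, by omega, by omega⟩
  exact ha

lemma natBd_blockFill_subset (E : Set ℕ) (n : ℕ → ℕ) : natBd (blockFill E n) ⊆ E := by
  rintro x ⟨hx, hx' | hx'⟩
  · exact mem_of_mem_blockFill_of_pred_notMem hx hx'
  · exact mem_of_mem_blockFill_of_succ_notMem hx hx'

lemma mem_blockFill_of_mem (hn : StrictMono n) {x : ℕ} (hxE : x ∈ E) (hx : n 0 < x) :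
    x ∈ blockFill E n := by
  obtain ⟨j, hj⟩ := hn.exists_mem_Ioc hx
  exact ⟨j, x, x, hxE, hxE, by omega, hj.1, hj.2, le_rfl, le_rfl⟩

lemma mem_thick_of_mem_blockFill (hn : Monotone n) {j x : ℕ} (hx : x ∈ blockFill E n)
    (hxj : x ∈ Ioc (n j) (n (j + 1))) : x ∈ thick E (j + 1) := by
  obtain ⟨i, a, b, ha, hb, hab, hia, hbi, hax, hxb⟩ := hx
  obtain rfl : i = j := hn.eq_of_mem_Ioc ⟨by omega, by omega⟩ hxj
  exact ⟨a, b, ha, hb, hab, hax, hxb⟩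

/-- Two left (or two right) endpoints of `blockFill E n` in block `j` lie in `E`, so at distance
at most `j + 1` they would have been joined. -/
lemma ncard_natBd_blockFill_inter_Ioc_le (j : ℕ) :
    (natBd (blockFill E n) ∩ Ioc (n j) (n (j + 1))).ncard ≤ 2 * (n (j + 1) / (j + 1) + 1) := by
  set F := blockFill E n
  set I := Ioc (n j) (n (j + 1))
  set L := {x | x ∈ I ∧ x ∈ F ∧ x - 1 ∉ F}
  set R := {x | x ∈ I ∧ x ∈ F ∧ x + 1 ∉ F}
  have hL : L.ncard ≤ n (j + 1) / (j + 1) + 1 := by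
    refine ncard_le_div_add_one_of_separated (by omega) (fun x hx => hx.1.2) ?_
    intro x hx y hy hxy
    by_contra! hclose
    exact hy.2.2 ⟨j, x, y, mem_of_mem_blockFill_of_pred_notMem hx.2.1 hx.2.2,
      mem_of_mem_blockFill_of_pred_notMem hy.2.1 hy.2.2, by omega, hx.1.1, hy.1.2, by omega,
      by omega⟩
  have hR : R.ncard ≤ n (j + 1) / (j + 1) + 1 := by
    refine ncard_le_div_add_one_of_separated (by omega) (fun x hx => hx.1.2) ?_
    intro x hx y hy hxy
    by_contra! hclose
    exact hx.2.2 ⟨j, x, y, mem_of_mem_blockFill_of_succ_notMem hx.2.1 hx.2.2,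
      mem_of_mem_blockFill_of_succ_notMem hy.2.1 hy.2.2, by omega, hx.1.1, hy.1.2, by omega,
      by omega⟩
  have hsub : natBd F ∩ I ⊆ L ∪ R := by
    rintro x ⟨⟨hxF, h | h⟩, hxI⟩
    exacts [Or.inl ⟨hxI, hxF, h⟩, Or.inr ⟨hxI, hxF, h⟩]
  calc (natBd F ∩ I).ncard ≤ (L ∪ R).ncard :=
        ncard_le_ncard hsub (((finite_Ioc _ _).subset fun x hx => hx.1).union
          ((finite_Ioc _ _).subset fun x hx => hx.1))
    _ ≤ L.ncard + R.ncard := ncard_union_le L R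
    _ ≤ 2 * (n (j + 1) / (j + 1) + 1) := by omega

lemma tendsto_dens_inter_blockFill (hn : StrictMono n) {δ : ℝ}
    (hE : Tendsto (fun k => dens E (n k)) atTop (𝓝 δ)) :
    Tendsto (fun k => dens (E ∩ blockFill E n) (n k)) atTop (𝓝 δ) := by
  have hcover : E ⊆ (E ∩ blockFill E n) ∪ Iic (n 0) := fun x hx => by
    rcases le_or_gt x (n 0) with h | h
    exacts [Or.inr h, Or.inl ⟨hx, mem_blockFill_of_mem hn hx h⟩]
  have hlow (k : ℕ) : dens E (n k) - n 0 / n k ≤ dens (E ∩ blockFill E n) (n k) := by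
    linarith [dens_mono hcover (n k), dens_union_le (E ∩ blockFill E n) (Iic (n 0)) (n k),
      dens_Iic_le (n 0) (n k)]
  have hvanish : Tendsto (fun k => (n 0 : ℝ) / n k) atTop (𝓝 0) :=
    tendsto_const_nhds.div_atTop (tendsto_natCast_atTop_atTop.comp hn.tendsto_atTop)
  exact tendsto_of_tendsto_of_tendsto_of_le_of_le (by simpa using hE.sub hvanish) hE hlow
    fun k => dens_mono inter_subset_left _

lemma tendsto_dens_natBd_blockFill (hn : Tendsto n atTop atTop)
    (hr : Tendsto (fun k => (n k : ℝ) / n (k + 1)) atTop (𝓝 0)) :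
    Tendsto (fun k => dens (natBd (blockFill E n)) (n k)) atTop (𝓝 0) := by
  rw [← tendsto_add_atTop_iff_nat 1]
  have hbound (k : ℕ) : dens (natBd (blockFill E n)) (n (k + 1)) ≤
      n k / n (k + 1) + 2 * (1 / (k + 1) + 1 / n (k + 1)) := by
    set N := n (k + 1)
    set B := natBd (blockFill E n) ∩ Ioc (n k) N
    have hcover : natBd (blockFill E n) ∩ Icc 1 N ⊆ Iic (n k) ∪ B := fun x ⟨hx, _, hxN⟩ => by
      rcases le_or_gt x (n k) with h | h
      exacts [Or.inl h, Or.inr ⟨hx, h, hxN⟩]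
    have hB : dens B N ≤ 2 * (1 / (k + 1) + 1 / N) := by
      refine (dens_le_ncard_div ((finite_Ioc _ _).inter_of_right _) N).trans ?_
      have hcount : (B.ncard : ℝ) ≤ 2 * (((N / (k + 1) : ℕ) : ℝ) + 1) := by
        exact_mod_cast ncard_natBd_blockFill_inter_Ioc_le k
      calc (B.ncard : ℝ) / N ≤ 2 * ((((N / (k + 1) : ℕ) : ℝ) + 1) / N) := by
            rw [mul_div_assoc']; gcongr
        _ ≤ 2 * (1 / (k + 1) + 1 / N) := by
            gcongr; exact_mod_cast natCast_div_add_one_div_le N (k + 1)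
    linarith [dens_le_dens_of_inter_subset hcover, dens_union_le (Iic (n k)) B N,
      dens_Iic_le (n k) N]
  have hlim : Tendsto (fun k : ℕ => (n k : ℝ) / n (k + 1) + 2 * (1 / (k + 1) + 1 / n (k + 1)))
      atTop (𝓝 (0 + 2 * (0 + 0))) :=
    hr.add ((tendsto_one_div_add_atTop_nhds_zero_nat.add (tendsto_const_nhds.div_atTop
      (tendsto_natCast_atTop_atTop.comp (hn.comp (tendsto_add_atTop_nat 1))))).const_mul 2)
  simp only [add_zero, mul_zero] at hlim
  exact squeeze_zero (fun k => dens_nonneg _ _) hbound hlim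

lemma limsup_dens_blockFill_diff_thick_le (hn : Monotone n)
    (hr : Tendsto (fun k => (n k : ℝ) / n (k + 1)) atTop (𝓝 0)) {M : ℕ} {a A : ℝ}
    (hM : Tendsto (fun k => dens (thick E M) (n k)) atTop (𝓝 a))
    (hdiag : ∀ k : ℕ, dens (thick E (k + 1)) (n (k + 1)) ≤ A + 1 / (k + 1)) :
    limsup (fun k => dens (blockFill E n \ thick E M) (n k)) atTop ≤ A - a := by
  rw [← limsup_nat_add _ 1]
  have hbound : ∀ k ≥ M, dens (blockFill E n \ thick E M) (n (k + 1)) ≤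
      n k / n (k + 1) + (A + 1 / (k + 1)) - dens (thick E M) (n (k + 1)) := by
    intro k hk
    set N := n (k + 1)
    have hcover : (blockFill E n \ thick E M) ∩ Icc 1 N ⊆
        Iic (n k) ∪ (thick E (k + 1) \ thick E M) := fun x ⟨⟨hxF, hxM⟩, _, hxN⟩ => by
      rcases le_or_gt x (n k) with h | h
      exacts [Or.inl h, Or.inr ⟨mem_thick_of_mem_blockFill hn hxF ⟨h, hxN⟩, hxM⟩]
    linarith [dens_le_dens_of_inter_subset hcover,
      dens_union_le (Iic (n k)) (thick E (k + 1) \ thick E M) N, dens_Iic_le (n k) N, hdiag k,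
      dens_diff_add_dens (thick_mono E (show M ≤ k + 1 by omega)) N]
  have hlim : Tendsto (fun k : ℕ => (n k : ℝ) / n (k + 1) + (A + 1 / (k + 1)) -
      dens (thick E M) (n (k + 1))) atTop (𝓝 (0 + (A + 0) - a)) :=
    (hr.add (tendsto_const_nhds.add tendsto_one_div_add_atTop_nhds_zero_nat)).sub
      (hM.comp (tendsto_add_atTop_nat 1))
  simp only [zero_add, add_zero] at hlim
  exact limsup_le_of_eventually_le_of_tendsto (isCoboundedUnder_le_dens _ _ _)
    (eventually_atTop.2 ⟨M, hbound⟩) hlim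

end BlockFill

lemma exists_strictMono_forall_succ {p : ℕ → ℕ → ℕ → Prop}
    (h : ∀ k i, ∀ᶠ j in atTop, p k i j) :
    ∃ φ : ℕ → ℕ, StrictMono φ ∧ ∀ k, p k (φ k) (φ (k + 1)) := by
  choose f hf using fun k i => ((h k i).and (eventually_gt_atTop i)).exists
  exact ⟨fun k => Nat.rec 0 f k, strictMono_nat_of_lt_succ fun k => (hf k _).2,
    fun k => (hf k _).1⟩

lemma exists_seq_tendsto_upperDensity_and_thick (E : Set ℕ) :
    ∃ (m : ℕ → ℕ) (α : ℕ → ℝ), Tendsto m atTop atTop ∧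
      Tendsto (fun i => dens E (m i)) atTop (𝓝 (upperDensity E)) ∧
      ∀ M, Tendsto (fun i => dens (thick E M) (m i)) atTop (𝓝 (α M)) := by
  obtain ⟨x, hxE, hx⟩ := exists_seq_tendsto_limsup (isCoboundedUnder_le_dens atTop E id)
    (isBoundedUnder_le_dens atTop E id)
  obtain ⟨α, -, φ, hφ, hα⟩ := (isCompact_univ_pi fun _ : ℕ => isCompact_Icc).tendsto_subseq
    (x := fun i M => dens (thick E M) (x i)) fun i M _ => dens_mem_Icc _ _
  exact ⟨x ∘ φ, α, hx.comp hφ.tendsto_atTop, hxE.comp hφ.tendsto_atTop, tendsto_pi_nhds.1 hα⟩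

lemma exists_lacunary_seq_tendsto_dens_thick (E : Set ℕ) :
    ∃ (n : ℕ → ℕ) (α : ℕ → ℝ) (A : ℝ), StrictMono n ∧
      Tendsto (fun k => dens E (n k)) atTop (𝓝 (upperDensity E)) ∧
      Tendsto (fun k => (n k : ℝ) / n (k + 1)) atTop (𝓝 0) ∧
      (∀ M, Tendsto (fun k => dens (thick E M) (n k)) atTop (𝓝 (α M))) ∧
      Tendsto α atTop (𝓝 A) ∧
      ∀ k : ℕ, dens (thick E (k + 1)) (n (k + 1)) ≤ A + 1 / (k + 1) := by
  obtain ⟨m, α, hm, hmE, hα⟩ := exists_seq_tendsto_upperDensity_and_thick E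
  have hαmono : Monotone α := fun M M' h =>
    le_of_tendsto_of_tendsto' (hα M) (hα M') fun i => dens_mono (thick_mono E h) _
  have hαbdd : BddAbove (range α) :=
    ⟨1, forall_mem_range.2 fun M => le_of_tendsto' (hα M) fun i => dens_le_one _ _⟩
  set A := ⨆ M, α M
  have hgrow (k i : ℕ) : ∀ᶠ j in atTop, (m i < m j ∧ (m i : ℝ) / m j ≤ 1 / (k + 1)) ∧
      dens (thick E (k + 1)) (m j) ≤ A + 1 / (k + 1) := by
    have hk : (0 : ℝ) < 1 / (k + 1) := by positivity
    refine ((hm.eventually_gt_atTop (m i)).and ?_).and ?_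
    · exact (tendsto_const_nhds.div_atTop (tendsto_natCast_atTop_atTop.comp hm)).eventually
        (ge_mem_nhds hk)
    · exact (hα (k + 1)).eventually (ge_mem_nhds (by linarith [le_ciSup hαbdd (k + 1)]))
  obtain ⟨φ, hφ, hφgrow⟩ := exists_strictMono_forall_succ hgrow
  refine ⟨m ∘ φ, α, A, strictMono_nat_of_lt_succ fun k => (hφgrow k).1.1,
    hmE.comp hφ.tendsto_atTop, ?_, fun M => (hα M).comp hφ.tendsto_atTop,
    tendsto_atTop_ciSup hαmono hαbdd, fun k => (hφgrow k).2⟩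
  exact squeeze_zero (fun k => by positivity) (fun k => (hφgrow k).1.2)
    tendsto_one_div_add_atTop_nhds_zero_nat

theorem stmt0_general (E : Set ℕ) :
    ∃ (𝔫 : ℕ → ℕ) (F : Set ℕ), StrictMono 𝔫 ∧ natBd F ⊆ E ∧
      (∃ L : ℝ, upperDensity E ≤ L ∧
        Tendsto (fun k => dens F (𝔫 k)) atTop (nhds L)) ∧
      Tendsto (fun k => dens (E ∩ F) (𝔫 k)) atTop (nhds (upperDensity E)) ∧
      limsup (fun k => dens (natBd F) (𝔫 k)) atTop = 0 ∧
      Tendsto (fun M => limsup (fun k => dens (F \ thick E M) (𝔫 k)) atTop)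
        atTop (nhds 0) := by
  obtain ⟨n, α, A, hn, hE, hr, hα, hαA, hdiag⟩ := exists_lacunary_seq_tendsto_dens_thick E
  set F := blockFill E n
  obtain ⟨L, -, ψ, hψ, hL⟩ := isCompact_Icc.tendsto_subseq fun k => dens_mem_Icc F (n k)
  have hψ' := hψ.tendsto_atTop
  have hEF := (tendsto_dens_inter_blockFill hn hE).comp hψ'
  refine ⟨n ∘ ψ, F, hn.comp hψ, natBd_blockFill_subset E n,
    ⟨L, le_of_tendsto_of_tendsto' hEF hL fun k => dens_mono inter_subset_right _, hL⟩, hEF,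
    ((tendsto_dens_natBd_blockFill hn.tendsto_atTop hr).comp hψ').limsup_eq, ?_⟩
  refine tendsto_of_tendsto_of_tendsto_of_le_of_le tendsto_const_nhds
    (by simpa using hαA.const_sub A) (fun M => ?_) fun M => ?_
  · exact le_limsup_of_frequently_le (Frequently.of_forall fun k => dens_nonneg _ _)
      (isBoundedUnder_le_dens _ _ _)
  · exact (hψ'.limsup_comp_le_limsup (isCoboundedUnder_le_dens _ _ _)
      (isBoundedUnder_le_dens _ _ _)).trans
      (limsup_dens_blockFill_diff_thick_le hn.monotone hr (hα M) hdiag)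

/-- For any `E ⊆ ℕ` with positive upper density there are a subsequence `𝔫` and a set `F`
with `∂F ⊆ E` such that `d^𝔫(F) ≥ d^𝔫(E ∩ F) = d̄(E)`, `F` is Følner along `𝔫`, and `E` is
dense in `F` along `𝔫`. -/
theorem stmt0 (E : Set ℕ) (hE : 0 < upperDensity E) :
    ∃ (𝔫 : ℕ → ℕ) (F : Set ℕ), StrictMono 𝔫 ∧ natBd F ⊆ E ∧
      (∃ L : ℝ, upperDensity E ≤ L ∧
        Tendsto (fun k => dens F (𝔫 k)) atTop (nhds L)) ∧
      Tendsto (fun k => dens (E ∩ F) (𝔫 k)) atTop (nhds (upperDensity E)) ∧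
      limsup (fun k => dens (natBd F) (𝔫 k)) atTop = 0 ∧
      Tendsto (fun M => limsup (fun k => dens (F \ thick E M) (𝔫 k)) atTop)
        atTop (nhds 0) :=
  stmt0_general E
end

section
/- Let (X,T) be a topological system, Φ = (φ_n)_{n∈ℕ} a continuous subadditive process on (X,T), and E : X → P(ℕ) a map that is 0-large with respect to Φ. Fix x ∈ X, integers n ≥ N ≥ M ≥ 1, and a nonempty F_n ⊆ {1,…,n} with ∂F_n ⊆ E(x). Then φ_E^{F_n}(x)/#F_n ≥ (1/#F_n) Σ_{k∈F_n} φ_N⁺(T^k x)/N − [d_n(F_n∖E_M(x)) + N·d_n(∂F_n) + 4M/N] · sup_{y∈X}|φ_1(y)| / d_n(F_n), where φ_N⁺ = max(φ_N, 0). -/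
/-!
Write `ψ k l = φ_{l-k}(T^k x)`, a subadditive function of integer intervals with
`ψ k (k + m) ≤ m S`, `S = sup |φ₁|`. Cut a window `⟦k, k+N⟦` at the points of `E(x)` it contains:
each full gap between consecutive points is a nonnegative term of `φ_E` by `0`-largeness, and the
two incomplete gaps at the ends cost at most `S` per point outside `E_M(x)` plus `S (M + 1)` each,
since a gap free of `E(x)` meets `E_M(x)` in at most `M + 1` points. Summing over the windows
contained in `F`, every term of `φ_E^F` and every point of `F ∖ E_M` is counted at most `N` times;
the remaining windows start within `N` of a boundary point of `F` and cost at most `N S` each.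
-/

open Filter MeasureTheory Topology
open scoped ENNReal

/-- The next element of `E` strictly after `a`. -/
noncomputable def nextEl (E : Set ℕ) (a : ℕ) : ℕ := sInf {b | b ∈ E ∧ a < b}

/-- `φ_E^F(x) = ∑_𝗄 φ_{b_𝗄 - a_𝗄}(T^{a_𝗄} x)`, where `F⁻ = {k ∈ F : k+1 ∈ F}` is decomposed
into `E`-irreducible intervals `⟦a_𝗄, b_𝗄⟦`; the left endpoints `a_𝗄` are exactly the
elements of `F⁻ ∩ E` and `b_𝗄` is the next element of `E` after `a_𝗄`. -/
noncomputable def phiE {X : Type*} (φ : ℕ → X → ℝ) (T : X → X) (E : Set ℕ)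
    (F : Finset ℕ) (x : X) : ℝ := by
  classical
  exact ∑ a ∈ F.filter (fun a => a + 1 ∈ F ∧ a ∈ E), φ (nextEl E a - a) (T^[a] x)

open Finset

section Combinatorics

open scoped Classical

theorem card_filter_mem_thick_Ico_le {E : Set ℕ} {M k l : ℕ}
    (hE : ∀ j, k < j → j < l → j ∉ E) : #{j ∈ Ico k l | j ∈ thick E M} ≤ M + 1 := by
  calc #{j ∈ Ico k l | j ∈ thick E M} ≤ #(insert k (Ico (l - M) l)) := by
        refine card_le_card fun j hj => ?_
        obtain ⟨hjI, a, b, -, hb, hba, haj, hjb⟩ := mem_filter.mp hj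
        obtain ⟨hkj, hjl⟩ := mem_Ico.mp hjI
        rcases hkj.eq_or_lt with rfl | hkj
        · exact mem_insert_self _ _
        · have hlb : l ≤ b := not_lt.mp fun hbl => hE b (hkj.trans_le hjb) hbl hb
          exact mem_insert_of_mem (mem_Ico.mpr ⟨by omega, hjl⟩)
    _ ≤ M + 1 := (card_insert_le _ _).trans (by simp; omega)

theorem nextEl_spec {E : Set ℕ} {a b : ℕ} (hb : b ∈ E) (hab : a < b) :
    nextEl E a ∈ E ∧ a < nextEl E a ∧ nextEl E a ≤ b := by
  have h := Nat.sInf_mem (s := {c | c ∈ E ∧ a < c}) ⟨b, hb, hab⟩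
  exact ⟨h.1, h.2, Nat.sInf_le ⟨hb, hab⟩⟩

theorem exists_mem_natBd_of_not_Icc_subset {F : Finset ℕ} {k N : ℕ} (hk : k ∈ F)
    (hF : ¬ Icc k (k + N) ⊆ F) : ∃ b ∈ natBd (F : Set ℕ), k ≤ b ∧ b < k + N := by
  by_contra! hno
  have hrun : ∀ i ≤ N, k + i ∈ F := by
    intro i hi
    induction i with
    | zero => exact hk
    | succ i ih =>
      by_contra hout
      have := hno (k + i) ⟨ih (by omega), Or.inr hout⟩ (by omega)
      omega
  refine hF fun j hj => ?_
  obtain ⟨hkj, hjN⟩ := mem_Icc.mp hj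
  simpa [Nat.add_sub_cancel' hkj] using hrun (j - k) (by omega)

theorem sum_sum_inter_Ico_le {R : Type*} [AddCommMonoid R] [PartialOrder R]
    [IsOrderedAddMonoid R] (G A : Finset ℕ) (N : ℕ) {w : ℕ → R} (hw : ∀ a ∈ A, 0 ≤ w a) :
    ∑ k ∈ G, ∑ a ∈ A ∩ Ico k (k + N), w a ≤ N • ∑ a ∈ A, w a := by
  rw [sum_comm' (t' := A) (s' := fun a => {k ∈ G | k ≤ a ∧ a < k + N}) (by
    intro k a; simp only [mem_inter, mem_Ico, mem_filter]; tauto), smul_sum]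
  refine sum_le_sum fun a ha => ?_
  rw [sum_const]
  refine nsmul_le_nsmul_left (hw a ha) ?_
  calc #{k ∈ G | k ≤ a ∧ a < k + N} ≤ #(Icc (a + 1 - N) a) :=
        card_le_card fun k hk => by simp only [mem_filter, mem_Icc] at hk ⊢; omega
    _ ≤ N := by simp; omega

theorem card_filter_not_Icc_subset_le (F : Finset ℕ) (N : ℕ) :
    #{k ∈ F | ¬ Icc k (k + N) ⊆ F} ≤ N * (natBd (F : Set ℕ)).ncard := by
  set Bd := {b ∈ F | b ∈ natBd (F : Set ℕ)}
  have hBd : (natBd (F : Set ℕ)).ncard = #Bd := by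
    rw [← Set.ncard_coe_finset, coe_filter]
    congr 1
    ext b
    exact ⟨fun hb => ⟨hb.1, hb⟩, fun hb => hb.2⟩
  calc #{k ∈ F | ¬ Icc k (k + N) ⊆ F}
      ≤ ∑ k ∈ {k ∈ F | ¬ Icc k (k + N) ⊆ F}, ∑ _b ∈ Bd ∩ Ico k (k + N), 1 := by
        rw [card_eq_sum_ones]
        refine sum_le_sum fun k hk => ?_
        obtain ⟨hkF, hkN⟩ := mem_filter.mp hk
        obtain ⟨b, hb, hkb, hbN⟩ := exists_mem_natBd_of_not_Icc_subset hkF hkN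
        rw [← card_eq_sum_ones, Nat.one_le_iff_ne_zero, ← pos_iff_ne_zero, card_pos]
        exact ⟨b, mem_inter.mpr ⟨mem_filter.mpr ⟨hb.1, hb⟩, mem_Ico.mpr ⟨hkb, hbN⟩⟩⟩
    _ ≤ N • ∑ _b ∈ Bd, 1 := sum_sum_inter_Ico_le _ _ N fun _ _ => zero_le_one
    _ = N * (natBd (F : Set ℕ)).ncard := by rw [hBd, card_eq_sum_ones, smul_eq_mul]

end Combinatorics

def IntervalSubadditive (ψ : ℕ → ℕ → ℝ) : Prop :=
  ∀ k l m, k ≤ l → l ≤ m → ψ k m ≤ ψ k l + ψ l m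

section IntervalSubadditive

open scoped Classical

variable {ψ : ℕ → ℕ → ℝ} {S : ℝ} {E : Set ℕ} {M : ℕ}

theorem le_of_forall_notMem_Ioo (hgrowth : ∀ k m, ψ k (k + m) ≤ m * S) (hS : 0 ≤ S)
    {k l : ℕ} (hkl : k ≤ l) (hE : ∀ j, k < j → j < l → j ∉ E) :
    ψ k l ≤ S * #{j ∈ Ico k l | j ∉ thick E M} + S * (M + 1) := by
  obtain ⟨m, rfl⟩ := Nat.exists_eq_add_of_le hkl
  have hsplit : #{j ∈ Ico k (k + m) | j ∈ thick E M} + #{j ∈ Ico k (k + m) | j ∉ thick E M}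
      = m := by
    rw [card_filter_add_card_filter_not]; simp
  have hsplit' : (m : ℝ)
      = #{j ∈ Ico k (k + m) | j ∈ thick E M} + #{j ∈ Ico k (k + m) | j ∉ thick E M} := by
    exact_mod_cast hsplit.symm
  have hthick : (#{j ∈ Ico k (k + m) | j ∈ thick E M} : ℝ) ≤ M + 1 := by
    exact_mod_cast card_filter_mem_thick_Ico_le hE
  calc ψ k (k + m) ≤ m * S := hgrowth k m
    _ = S * #{j ∈ Ico k (k + m) | j ∈ thick E M} + S * #{j ∈ Ico k (k + m) | j ∉ thick E M} := by
      rw [hsplit']; ring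
    _ ≤ _ := by nlinarith

theorem le_sum_nextEl_of_mem (hψ : IntervalSubadditive ψ)
    (hgrowth : ∀ k m, ψ k (k + m) ≤ m * S) (hS : 0 ≤ S)
    (hlarge : ∀ a ∈ E, 0 ≤ ψ a (nextEl E a)) {k l : ℕ} (hk : k ∈ E) (hkl : k ≤ l) :
    ψ k l ≤ ∑ a ∈ Ico k l with a ∈ E, ψ a (nextEl E a)
      + S * #{j ∈ Ico k l | j ∉ thick E M} + S * (M + 1) := by
  by_cases hnext : ∃ e ∈ E, k < e ∧ e ≤ l
  · obtain ⟨e', he'E, hke', he'l⟩ := hnext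
    obtain ⟨heE, hke, hee'⟩ := nextEl_spec he'E hke'
    have hel : nextEl E k ≤ l := hee'.trans he'l
    set e := nextEl E k
    have ih := le_sum_nextEl_of_mem hψ hgrowth hS hlarge heE hel
    have hsum : ψ k e + ∑ a ∈ Ico e l with a ∈ E, ψ a (nextEl E a)
        ≤ ∑ a ∈ Ico k l with a ∈ E, ψ a (nextEl E a) := by
      rw [← sum_insert (f := fun a => ψ a (nextEl E a)) (s := {a ∈ Ico e l | a ∈ E})
        (by simp; omega)]
      refine sum_le_sum_of_subset_of_nonneg (fun a ha => ?_)
        fun a ha _ => hlarge a (mem_filter.mp ha).2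
      rcases mem_insert.mp ha with rfl | ha
      · simp only [mem_filter, mem_Ico]; exact ⟨⟨le_rfl, by omega⟩, hk⟩
      · simp only [mem_filter, mem_Ico] at ha ⊢; exact ⟨⟨by omega, ha.1.2⟩, ha.2⟩
    have hcount : (#{j ∈ Ico e l | j ∉ thick E M} : ℝ) ≤ #{j ∈ Ico k l | j ∉ thick E M} := by
      exact_mod_cast card_le_card (filter_subset_filter _ (Ico_subset_Ico_left hke.le))
    have := hψ k e l hke.le hel
    nlinarith
  · push Not at hnext
    have hlead := le_of_forall_notMem_Ioo (M := M) hgrowth hS hkl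
      fun j hkj hjl hj => (hnext j hj hkj).not_ge hjl.le
    have : 0 ≤ ∑ a ∈ Ico k l with a ∈ E, ψ a (nextEl E a) :=
      sum_nonneg fun a ha => hlarge a (mem_filter.mp ha).2
    linarith
termination_by l - k

theorem le_sum_nextEl (hψ : IntervalSubadditive ψ)
    (hgrowth : ∀ k m, ψ k (k + m) ≤ m * S) (hS : 0 ≤ S)
    (hlarge : ∀ a ∈ E, 0 ≤ ψ a (nextEl E a)) {k l : ℕ} (hkl : k ≤ l) :
    ψ k l ≤ ∑ a ∈ Ico k l with a ∈ E, ψ a (nextEl E a)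
      + S * #{j ∈ Ico k l | j ∉ thick E M} + 2 * (S * (M + 1)) := by
  have hsum_nonneg : 0 ≤ ∑ a ∈ Ico k l with a ∈ E, ψ a (nextEl E a) :=
    sum_nonneg fun a ha => hlarge a (mem_filter.mp ha).2
  by_cases h : ∃ b, b ∈ E ∧ k ≤ b ∧ b < l
  · obtain ⟨hbE, hkb, hbl⟩ := Nat.find_spec h
    set b := Nat.find h
    have hlead := le_of_forall_notMem_Ioo (M := M) hgrowth hS hkb
      fun j hkj hjb hj => Nat.find_min h hjb ⟨hj, hkj.le, hjb.trans hbl⟩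
    have hchain := le_sum_nextEl_of_mem (M := M) hψ hgrowth hS hlarge hbE hbl.le
    have hsum : ∑ a ∈ Ico b l with a ∈ E, ψ a (nextEl E a)
        ≤ ∑ a ∈ Ico k l with a ∈ E, ψ a (nextEl E a) :=
      sum_le_sum_of_subset_of_nonneg (filter_subset_filter _ (Ico_subset_Ico_left hkb))
        fun a ha _ => hlarge a (mem_filter.mp ha).2
    have hcount : #{j ∈ Ico k b | j ∉ thick E M} + #{j ∈ Ico b l | j ∉ thick E M}
        = #{j ∈ Ico k l | j ∉ thick E M} := by
      rw [← card_union_of_disjoint (disjoint_filter_filter (Ico_disjoint_Ico_consecutive k b l)),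
        ← filter_union, Ico_union_Ico_eq_Ico hkb hbl.le]
    have hcount' : (#{j ∈ Ico k b | j ∉ thick E M} : ℝ) + #{j ∈ Ico b l | j ∉ thick E M}
        = #{j ∈ Ico k l | j ∉ thick E M} := by exact_mod_cast hcount
    have := hψ k b l hkb hbl.le
    nlinarith
  · push Not at h
    have hlead := le_of_forall_notMem_Ioo (M := M) hgrowth hS hkl
      fun j hkj hjl hj => (h j hj hkj.le).not_gt hjl
    nlinarith

theorem max_zero_le_of_Icc_subset (hψ : IntervalSubadditive ψ)
    (hgrowth : ∀ k m, ψ k (k + m) ≤ m * S) (hS : 0 ≤ S)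
    (hlarge : ∀ a ∈ E, 0 ≤ ψ a (nextEl E a)) {F : Finset ℕ} {k N : ℕ}
    (hwin : Icc k (k + N) ⊆ F) :
    max (ψ k (k + N)) 0 ≤ ∑ a ∈ {a ∈ F | a + 1 ∈ F ∧ a ∈ E} ∩ Ico k (k + N), ψ a (nextEl E a)
      + S * #({j ∈ F | j ∉ thick E M} ∩ Ico k (k + N)) + 2 * (S * (M + 1)) := by
  have hF : ∀ j ∈ Ico k (k + N), j ∈ F ∧ j + 1 ∈ F := fun j hj => by
    obtain ⟨hkj, hjN⟩ := mem_Ico.mp hj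
    exact ⟨hwin (mem_Icc.mpr ⟨hkj, by omega⟩), hwin (mem_Icc.mpr ⟨by omega, hjN⟩)⟩
  have hA : {a ∈ F | a + 1 ∈ F ∧ a ∈ E} ∩ Ico k (k + N) = {a ∈ Ico k (k + N) | a ∈ E} := by
    ext a
    simp only [mem_inter, mem_filter]
    exact ⟨fun h => ⟨h.2, h.1.2.2⟩, fun h => ⟨⟨(hF a h.1).1, (hF a h.1).2, h.2⟩, h.1⟩⟩
  have hNT : {j ∈ F | j ∉ thick E M} ∩ Ico k (k + N) = {j ∈ Ico k (k + N) | j ∉ thick E M} := by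
    ext j
    simp only [mem_inter, mem_filter]
    exact ⟨fun h => ⟨h.2, h.1.2⟩, fun h => ⟨⟨(hF j h.1).1, h.2⟩, h.1⟩⟩
  rw [hA, hNT]
  refine max_le (le_sum_nextEl hψ hgrowth hS hlarge (Nat.le_add_right k N)) ?_
  have : 0 ≤ ∑ a ∈ Ico k (k + N) with a ∈ E, ψ a (nextEl E a) :=
    sum_nonneg fun a ha => hlarge a (mem_filter.mp ha).2
  positivity

theorem sum_max_zero_le (hψ : IntervalSubadditive ψ)
    (hgrowth : ∀ k m, ψ k (k + m) ≤ m * S) (hS : 0 ≤ S)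
    (hlarge : ∀ a ∈ E, 0 ≤ ψ a (nextEl E a)) (F : Finset ℕ) (N : ℕ) :
    ∑ k ∈ F, max (ψ k (k + N)) 0
      ≤ N * ∑ a ∈ F with a + 1 ∈ F ∧ a ∈ E, ψ a (nextEl E a)
        + N * (S * #{j ∈ F | j ∉ thick E M}) + #F * (2 * (S * (M + 1)))
        + N * (natBd (F : Set ℕ)).ncard * (N * S) := by
  set G := {k ∈ F | Icc k (k + N) ⊆ F}
  set B := {k ∈ F | ¬ Icc k (k + N) ⊆ F}
  have hgood := sum_le_sum (s := G) fun k hk =>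
    max_zero_le_of_Icc_subset (M := M) hψ hgrowth hS hlarge (mem_filter.mp hk).2
  rw [sum_add_distrib, sum_add_distrib, ← mul_sum, sum_const, nsmul_eq_mul] at hgood
  have hphi := sum_sum_inter_Ico_le G {a ∈ F | a + 1 ∈ F ∧ a ∈ E} N
    (w := fun a => ψ a (nextEl E a))
    fun a ha => hlarge a (mem_filter.mp ha).2.2
  have hthick : (∑ k ∈ G, #({j ∈ F | j ∉ thick E M} ∩ Ico k (k + N)) : ℝ)
      ≤ N * #{j ∈ F | j ∉ thick E M} := by
    have := sum_sum_inter_Ico_le G {j ∈ F | j ∉ thick E M} N (w := fun _ => 1)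
      fun _ _ => zero_le_one
    simp only [← card_eq_sum_ones, smul_eq_mul] at this
    exact_mod_cast this
  rw [nsmul_eq_mul] at hphi
  have hG : (#G : ℝ) * (2 * (S * (M + 1))) ≤ #F * (2 * (S * (M + 1))) := by
    gcongr; exact filter_subset _ F
  have hbad : ∑ k ∈ B, max (ψ k (k + N)) 0 ≤ N * (natBd (F : Set ℕ)).ncard * (N * S) :=
    calc ∑ k ∈ B, max (ψ k (k + N)) 0 ≤ #B * (N * S) := by
          rw [← nsmul_eq_mul]
          exact sum_le_card_nsmul _ _ _ fun k _ => max_le (hgrowth k N) (by positivity)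
      _ ≤ _ := by gcongr; exact_mod_cast card_filter_not_Icc_subset_le F N
  rw [← sum_filter_add_sum_filter_not F (fun k => Icc k (k + N) ⊆ F)]
  nlinarith

theorem sum_max_zero_div_card_sub_le (hψ : IntervalSubadditive ψ)
    (hgrowth : ∀ k m, ψ k (k + m) ≤ m * S) (hS : 0 ≤ S)
    (hlarge : ∀ a ∈ E, 0 ≤ ψ a (nextEl E a)) {F : Finset ℕ} {n N : ℕ} (hM : 1 ≤ M)
    (hN : 0 < N) (hF : F.Nonempty) (hFn : #F ≤ n) :
    (∑ k ∈ F, max (ψ k (k + N)) 0 / N) / #F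
      - ((#{j ∈ F | j ∉ thick E M} / n + N * ((natBd (F : Set ℕ)).ncard / n) + 4 * M / N) * S)
        / (#F / n)
    ≤ (∑ a ∈ F with a + 1 ∈ F ∧ a ∈ E, ψ a (nextEl E a)) / #F := by
  have key := sum_max_zero_le (M := M) hψ hgrowth hS hlarge F N
  rw [← sum_div]
  set A := ∑ k ∈ F, max (ψ k (k + N)) 0
  set P := ∑ a ∈ F with a + 1 ∈ F ∧ a ∈ E, ψ a (nextEl E a)
  set a : ℝ := ((#{j ∈ F | j ∉ thick E M} : ℕ) : ℝ)
  set b : ℝ := (((natBd (F : Set ℕ)).ncard : ℕ) : ℝ)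
  have hF' : (0 : ℝ) < #F := by exact_mod_cast hF.card_pos
  have hn : (0 : ℝ) < n := by exact_mod_cast hF.card_pos.trans_le hFn
  have hN' : (0 : ℝ) < N := by exact_mod_cast hN
  have hM' : (1 : ℝ) ≤ M := by exact_mod_cast hM
  have hFn' : (#F : ℝ) ≤ n := by exact_mod_cast hFn
  -- `2 (M + 1) ≤ 4 M` absorbs the two end gaps of each window
  have hslack : #F * (2 * (S * (M + 1))) ≤ n * (4 * M * S) := by
    nlinarith [mul_le_mul_of_nonneg_right hFn' (by positivity : 0 ≤ 2 * (S * (M + 1))),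
      mul_nonneg hn.le (mul_nonneg hS (sub_nonneg.2 hM'))]
  have hmain : A / N - n * ((a / n + N * (b / n) + 4 * M / N) * S) ≤ P := by
    rw [show n * ((a / n + N * (b / n) + 4 * M / N) * S) = S * a + N * b * S + n * (4 * M * S) / N
      by field_simp, sub_le_iff_le_add, div_le_iff₀ hN', add_mul, add_mul,
      div_mul_cancel₀ _ hN'.ne']
    nlinarith
  calc A / N / #F - ((a / n + N * (b / n) + 4 * M / N) * S) / (#F / n)
      = (A / N - n * ((a / n + N * (b / n) + 4 * M / N) * S)) / #F := by field_simp
    _ ≤ P / #F := by gcongr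

end IntervalSubadditive

section Orbit

variable {X : Type*} {T : X → X} {φ : ℕ → X → ℝ}

theorem le_mul_of_subadditive (hφ0 : ∀ x, φ 0 x = 0)
    (hsub : ∀ n m : ℕ, ∀ x : X, φ (n + m) x ≤ φ n x + φ m (T^[n] x)) {S : ℝ}
    (h1 : ∀ y, φ 1 y ≤ S) (m : ℕ) (y : X) : φ m y ≤ m * S := by
  induction m with
  | zero => simp [hφ0]
  | succ m ih => push_cast; linarith [hsub m 1 y, h1 (T^[m] y)]

theorem intervalSubadditive_orbit
    (hsub : ∀ n m : ℕ, ∀ x : X, φ (n + m) x ≤ φ n x + φ m (T^[n] x)) (x : X) :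
    IntervalSubadditive fun k l => φ (l - k) (T^[k] x) := by
  intro k l m hkl hlm
  have h := hsub (l - k) (m - l) (T^[k] x)
  rwa [← Function.iterate_add_apply, Nat.sub_add_cancel hkl, show l - k + (m - l) = m - k by omega]
    at h

theorem nonneg_nextEl_of_large (hφ0 : ∀ x, φ 0 x = 0) {E : Set ℕ} {x : X}
    (hlarge : ∀ k ∈ E, ∀ l ∈ E, k < l → (∀ j, k < j → j < l → j ∉ E) →
      0 ≤ φ (l - k) (T^[k] x)) {a : ℕ} (ha : a ∈ E) :
    0 ≤ φ (nextEl E a - a) (T^[a] x) := by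
  by_cases h : ∃ b ∈ E, a < b
  · obtain ⟨b, hb, hab⟩ := h
    obtain ⟨heE, hae, -⟩ := nextEl_spec hb hab
    exact hlarge a ha _ heE hae fun j haj hje hj => (nextEl_spec hj haj).2.2.not_gt hje
  · have hempty : {b | b ∈ E ∧ a < b} = ∅ := by
      ext b; simpa using fun hb => not_lt.mp fun hab => h ⟨b, hb, hab⟩
    simp [nextEl, hempty, hφ0]

end Orbit

theorem stmt3_general {X : Type*} [TopologicalSpace X] [CompactSpace X]
    (T : X → X)
    (φ : ℕ → X → ℝ) (hφ0 : ∀ x, φ 0 x = 0) (hφc : ∀ n, Continuous (φ n))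
    (hsub : ∀ n m : ℕ, ∀ x : X, φ (n + m) x ≤ φ n x + φ m (T^[n] x))
    (E : X → Set ℕ)
    (hlarge : ∀ x : X, ∀ k ∈ E x, ∀ l ∈ E x, k < l → (∀ j, k < j → j < l → j ∉ E x) →
      0 ≤ φ (l - k) (T^[k] x))
    (x : X) (n N M : ℕ) (hM : 1 ≤ M) (hMN : M ≤ N)
    (F : Finset ℕ) (hFsub : F ⊆ Finset.Icc 1 n) (hFne : F.Nonempty) :
    (∑ k ∈ F, max (φ N (T^[k] x)) 0 / (N : ℝ)) / (F.card : ℝ)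
      - (((((F : Set ℕ) \ thick (E x) M).ncard : ℝ) / (n : ℝ)
          + (N : ℝ) * (((natBd (F : Set ℕ)).ncard : ℝ) / (n : ℝ))
          + 4 * (M : ℝ) / (N : ℝ)) * (⨆ y : X, |φ 1 y|))
        / ((F.card : ℝ) / (n : ℝ))
    ≤ phiE φ T (E x) F x / (F.card : ℝ) := by
  classical
  set S := ⨆ y : X, |φ 1 y|
  have hbdd : BddAbove (Set.range fun y => |φ 1 y|) := (isCompact_range (hφc 1).abs).bddAbove
  have hS : 0 ≤ S := (abs_nonneg _).trans (le_ciSup hbdd x)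
  have hgrowth (k m : ℕ) : φ (k + m - k) (T^[k] x) ≤ m * S := by
    simpa using le_mul_of_subadditive hφ0 hsub
      (fun y => (le_abs_self _).trans (le_ciSup hbdd y)) m (T^[k] x)
  have hNT : ((F : Set ℕ) \ thick (E x) M).ncard = #{j ∈ F | j ∉ thick (E x) M} := by
    rw [← Set.ncard_coe_finset, coe_filter]; rfl
  have hphiE : phiE φ T (E x) F x
      = ∑ a ∈ F with a + 1 ∈ F ∧ a ∈ E x, φ (nextEl (E x) a - a) (T^[a] x) := by
    rfl
  rw [hNT, hphiE]
  simpa using sum_max_zero_div_card_sub_le (intervalSubadditive_orbit hsub x) hgrowth hS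
    (fun a ha => nonneg_nextEl_of_large hφ0 (hlarge x) ha) hM (hM.trans hMN) hFne
    ((card_le_card hFsub).trans (by simp))

/-- Lemma on subadditive cocycles over `0`-large geometric sets: a lower bound for
`φ_E^{Fₙ}(x)/#Fₙ` in terms of the empirical average of `φ_N⁺/N` along `Fₙ`. -/
theorem stmt3 {X : Type*} [TopologicalSpace X] [CompactSpace X]
    [TopologicalSpace.MetrizableSpace X]
    (T : X → X) (hT : Continuous T)
    (φ : ℕ → X → ℝ) (hφ0 : ∀ x, φ 0 x = 0) (hφc : ∀ n, Continuous (φ n))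
    (hsub : ∀ n m : ℕ, ∀ x : X, φ (n + m) x ≤ φ n x + φ m (T^[n] x))
    (E : X → Set ℕ)
    (hlarge : ∀ x : X, ∀ k ∈ E x, ∀ l ∈ E x, k < l → (∀ j, k < j → j < l → j ∉ E x) →
      0 ≤ φ (l - k) (T^[k] x))
    (x : X) (n N M : ℕ) (hM : 1 ≤ M) (hMN : M ≤ N) (hNn : N ≤ n)
    (F : Finset ℕ) (hFsub : F ⊆ Finset.Icc 1 n) (hFne : F.Nonempty)
    (hFbd : natBd (F : Set ℕ) ⊆ E x) :
    (∑ k ∈ F, max (φ N (T^[k] x)) 0 / (N : ℝ)) / (F.card : ℝ)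
      - (((((F : Set ℕ) \ thick (E x) M).ncard : ℝ) / (n : ℝ)
          + (N : ℝ) * (((natBd (F : Set ℕ)).ncard : ℝ) / (n : ℝ))
          + 4 * (M : ℝ) / (N : ℝ)) * (⨆ y : X, |φ 1 y|))
        / ((F.card : ℝ) / (n : ℝ))
    ≤ phiE φ T (E x) F x / (F.card : ℝ) :=
  stmt3_general T φ hφ0 hφc hsub E hlarge x n N M hM hMN F hFsub hFne
end

section
/- Let (X,T) be a topological system, φ : X → ℝ continuous, and a > 0. Let A ⊆ X be Borel and E : A → P(ℕ) be a-large with respect to the additive cocycle (φ_n) with φ_n = Σ_{0≤k<n} φ∘T^k, i.e. Σ_{j=k}^{l−1} φ(T^j x) ≥ (l−k)a for all consecutive elements k < l of E(x). Let 𝔫 ⊆ ℕ be infinite, and for n ∈ 𝔫 let A_n ⊆ A be Borel and F_n ⊆ {1,…,n} be nonempty with: ∂F_n ⊆ E(x) for all x ∈ A_n; liminf_{𝔫∋n} #F_n/n > 0; limsup_{𝔫∋n} #(∂F_n)/n = 0; and lim_{M→∞} limsup_{𝔫∋n} sup_{x∈A_n} d_n(F_n∖E_M(x)) = 0. Let (μ_n)_{n∈𝔫}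 be Borel probability measures with μ_n(A_n) = 1. Then every weak-* limit μ of a subsequence of (μ_n^{F_n})_{n∈𝔫} satisfies: for μ-almost every x, limsup_n (1/n) Σ_{0≤k<n} φ(T^k x) ≥ a. -/
open Filter MeasureTheory Topology
open scoped ENNReal

/-- The empirical measure `μ^F = (1/#F) ∑_{k ∈ F} T^k_* μ`. -/
noncomputable def empMeas {X : Type*} [MeasurableSpace X] (T : X → X) (μ : Measure X)
    (F : Finset ℕ) : Measure X :=
  (F.card : ℝ≥0∞)⁻¹ • ∑ k ∈ F, Measure.map (T^[k]) μ

/-!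
Fix `δ > 0`. Chaining the `a`-largeness of `E(x)` over consecutive elements bounds the sum of
`φ ∘ Tʲ` between any two elements of `E(x)` from below by `a` times their distance; since `φ` is
bounded, a time `i ∈ E_M(x)` then inherits the bound up to an error `M ‖φ‖_∞`. Hence if `i` and
`i + N + M` both lie in `E_M(x)` and `N δ ≥ M ‖φ‖_∞`, the Birkhoff sum of `Tⁱ x` reaches `(a - δ) m`
at some time `m ∈ [N, N + M]`. The other times `i ∈ F_n` lie outside `E_M(x)`, are shifted by
`N + M` into `F_n \ E_M(x)`, or lie within `N + M` of a right end of `F_n`, so by the filling and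
Følner hypotheses they form an arbitrarily small proportion of `F_n`. Therefore the open set of
points whose Birkhoff sums stay below `(a - δ) m` for all `m ∈ [N, N + M]` has small
`μ_n^{F_n}`-measure, hence small `μ`-measure by the portmanteau theorem, with `N` as large as we
like. So `μ`-almost every point satisfies `Sₘ ≥ (a - δ) m` for infinitely many `m`.
-/

open Finset
open scoped NNReal

theorem sub_mul_le_sum_Ico_of_consecutive {E : Set ℕ} {u : ℕ → ℝ} {a : ℝ}
    (h : ∀ k ∈ E, ∀ l ∈ E, k < l → (∀ j, k < j → j < l → j ∉ E) →
      (l - k : ℝ) * a ≤ ∑ j ∈ Ico k l, u j)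
    {p q : ℕ} (hp : p ∈ E) (hq : q ∈ E) (hpq : p ≤ q) :
    (q - p : ℝ) * a ≤ ∑ j ∈ Ico p q, u j := by
  classical
  induction q using Nat.strong_induction_on with
  | _ q ih =>
  rcases hpq.eq_or_lt with rfl | hpq
  · simp
  have hne : ({j ∈ Ico p q | j ∈ E} : Finset ℕ).Nonempty := ⟨p, by simp [hp, hpq]⟩
  set s := ({j ∈ Ico p q | j ∈ E} : Finset ℕ).max' hne
  obtain ⟨hsIco, hsE⟩ := mem_filter.1 (max'_mem _ hne)
  obtain ⟨hps, hsq⟩ := mem_Ico.1 hsIco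
  have hcons : ∀ j, s < j → j < q → j ∉ E := fun j hsj hjq hj =>
    (le_max' _ j (mem_filter.2 ⟨mem_Ico.2 ⟨by omega, hjq⟩, hj⟩)).not_gt hsj
  rw [← sum_Ico_consecutive u hps hsq.le]
  linarith [ih s hsq hsE hps, h s hsE q hq hsq hcons]

theorem sub_mul_sub_le_sum_Ico_of_mem_thick {E : Set ℕ} {u : ℕ → ℝ} {a K : ℝ} {M i l : ℕ}
    (ha : 0 ≤ a) (hK : ∀ j, |u j| ≤ K)
    (hchain : ∀ p ∈ E, ∀ q ∈ E, p ≤ q → (q - p : ℝ) * a ≤ ∑ j ∈ Ico p q, u j)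
    (hi : i ∈ thick E M) (hl : l ∈ E) (hil : i ≤ l) :
    (l - i : ℝ) * a - M * K ≤ ∑ j ∈ Ico i l, u j := by
  obtain ⟨p, q, hp, -, hqp, hpi, hiq⟩ := hi
  have hhead : ∑ j ∈ Ico p i, u j ≤ M * K :=
    calc ∑ j ∈ Ico p i, u j ≤ ∑ j ∈ Ico p i, K :=
          sum_le_sum fun j _ => (le_abs_self _).trans (hK j)
      _ = (i - p : ℕ) * K := by simp
      _ ≤ M * K := by
          gcongr
          · exact (abs_nonneg _).trans (hK 0)
          · omega
  have hpl := hchain p hp l hl (hpi.trans hil)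
  rw [← sum_Ico_consecutive u hpi hil] at hpl
  have : (l - i : ℝ) * a ≤ (l - p) * a := by gcongr
  linarith

theorem exists_mem_add_one_notMem {F : Finset ℕ} {k m : ℕ} (hk : k ∈ F) (hm : m ∉ F)
    (hkm : k ≤ m) : ∃ q ∈ F, k ≤ q ∧ q < m ∧ q + 1 ∉ F := by
  induction m with
  | zero => exact absurd (Nat.le_zero.1 hkm ▸ hk) hm
  | succ m ih =>
    have hkm' : k ≤ m := Nat.le_of_lt_succ (lt_of_le_of_ne hkm (by rintro rfl; exact hm hk))
    by_cases hmF : m ∈ F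
    · exact ⟨m, hmF, hkm', m.lt_succ_self, hm⟩
    · obtain ⟨q, hq, hkq, hqm, hq1⟩ := ih hmF hkm'
      exact ⟨q, hq, hkq, hqm.trans m.lt_succ_self, hq1⟩

theorem card_filter_le_of_shift (F : Finset ℕ) (S : Set ℕ) [DecidablePred (· ∈ S)] (R : ℕ)
    (Q : ℕ → Prop) [DecidablePred Q] (hQ : ∀ k ∈ F, k ∈ S → k + R ∈ S → ¬ Q k) :
    #{k ∈ F | Q k} ≤ 2 * #{k ∈ F | k ∉ S} + R * #{q ∈ F | q + 1 ∉ F} := by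
  have hshift : #{k ∈ F | k + R ∈ F ∧ k + R ∉ S} ≤ #{k ∈ F | k ∉ S} :=
    card_le_card_of_injOn (· + R) (fun k hk => by simp_all) (fun _ _ _ _ h => by simpa using h)
  have hexit : #{k ∈ F | k + R ∉ F} ≤ #{q ∈ F | q + 1 ∉ F} * R := by
    refine (card_le_card fun k hk => ?_).trans
      (card_biUnion_le_card_mul _ (fun q => Icc (q + 1 - R) q) R fun q _ => by simp; omega)
    obtain ⟨hk, hkR⟩ := mem_filter.1 hk
    obtain ⟨q, hq, hkq, hqk, hq1⟩ := exists_mem_add_one_notMem hk hkR (Nat.le_add_right k R)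
    exact mem_biUnion.2 ⟨q, mem_filter.2 ⟨hq, hq1⟩, mem_Icc.2 ⟨by omega, hkq⟩⟩
  have hcover : {k ∈ F | Q k} ⊆ ({k ∈ F | k ∉ S} ∪ {k ∈ F | k + R ∈ F ∧ k + R ∉ S}) ∪
      {k ∈ F | k + R ∉ F} := by
    intro k hk
    have := hQ k
    simp only [mem_union, mem_filter] at hk ⊢
    tauto
  have := (card_le_card hcover).trans ((card_union_le _ _).trans
    (Nat.add_le_add_right (card_union_le _ _) _))
  rw [mul_comm R]
  omega

section Dynamics

variable {X : Type*}

theorem sum_Ico_eq_birkhoffSum {M : Type*} [AddCommMonoid M] (T : X → X) (φ : X → M) (x : X)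
    (i l : ℕ) :
    ∑ j ∈ Ico i l, φ (T^[j] x) = birkhoffSum T φ (l - i) (T^[i] x) := by
  rw [sum_Ico_eq_sum_range]
  simp only [birkhoffSum, ← Function.iterate_add_apply, add_comm i]

theorem exists_birkhoffSum_ge_of_mem_thick {T : X → X} {φ : X → ℝ} {x : X} {E : Set ℕ}
    {a δ K : ℝ} {M N i : ℕ}
    (hlarge : ∀ k ∈ E, ∀ l ∈ E, k < l → (∀ j, k < j → j < l → j ∉ E) →
      (l - k : ℝ) * a ≤ ∑ j ∈ Ico k l, φ (T^[j] x))
    (ha : 0 ≤ a) (hδ : 0 ≤ δ) (hK : ∀ y, |φ y| ≤ K) (hMN : M * K ≤ N * δ)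
    (hi : i ∈ thick E M) (hiNM : i + (N + M) ∈ thick E M) :
    ∃ m ∈ Icc N (N + M), (a - δ) * m ≤ birkhoffSum T φ m (T^[i] x) := by
  obtain ⟨l, r, hl, -, hrl, hli, hir⟩ := hiNM
  have hil : i ≤ l := by omega
  refine ⟨l - i, mem_Icc.2 ⟨by omega, by omega⟩, ?_⟩
  have hsum := sub_mul_sub_le_sum_Ico_of_mem_thick ha (fun j => hK _)
    (fun p hp q hq hpq => sub_mul_le_sum_Ico_of_consecutive hlarge hp hq hpq) hi hl hil
  rw [sum_Ico_eq_birkhoffSum T φ x i l] at hsum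
  have hN : (N : ℝ) * δ ≤ (l - i : ℕ) * δ := by gcongr; omega
  rw [Nat.cast_sub hil] at hN ⊢
  linarith

open scoped Classical in
theorem card_filter_forall_birkhoffSum_lt_le {T : X → X} {φ : X → ℝ} {x : X} {E : Set ℕ}
    {a δ K : ℝ} {M N : ℕ}
    (hlarge : ∀ k ∈ E, ∀ l ∈ E, k < l → (∀ j, k < j → j < l → j ∉ E) →
      (l - k : ℝ) * a ≤ ∑ j ∈ Ico k l, φ (T^[j] x))
    (ha : 0 ≤ a) (hδ : 0 ≤ δ) (hK : ∀ y, |φ y| ≤ K) (hMN : M * K ≤ N * δ) (F : Finset ℕ) :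
    #{i ∈ F | ∀ m ∈ Icc N (N + M), birkhoffSum T φ m (T^[i] x) < (a - δ) * m} ≤
      2 * ((F : Set ℕ) \ thick E M).ncard + (N + M) * (natBd F).ncard := by
  have hcount := card_filter_le_of_shift F (thick E M) (N + M)
    (fun i => ∀ m ∈ Icc N (N + M), birkhoffSum T φ m (T^[i] x) < (a - δ) * m)
    fun i _ hi hiNM hbad => by
      obtain ⟨m, hm, hle⟩ := exists_birkhoffSum_ge_of_mem_thick hlarge ha hδ hK hMN hi hiNM
      exact (hbad m hm).not_ge hle
  have hdiff : #{i ∈ F | i ∉ thick E M} = ((F : Set ℕ) \ thick E M).ncard := by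
    rw [← Set.ncard_coe_finset, coe_filter]; rfl
  have hbd : #{q ∈ F | q + 1 ∉ F} ≤ (natBd F).ncard := by
    rw [← Set.ncard_coe_finset]
    refine Set.ncard_le_ncard (fun q hq => ?_) ((F.finite_toSet).subset fun q hq => hq.1)
    rw [mem_coe, mem_filter] at hq
    exact ⟨hq.1, Or.inr (by exact_mod_cast hq.2)⟩
  rw [← hdiff]
  exact hcount.trans (by gcongr)

end Dynamics

section Measure

variable {X : Type*} [MeasurableSpace X] {T : X → X}

theorem empMeas_apply (hT : Measurable T) (ν : Measure X) (F : Finset ℕ) {C : Set X}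
    (hC : MeasurableSet C) :
    empMeas T ν F C = (#F : ℝ≥0∞)⁻¹ * ∑ k ∈ F, ν (T^[k] ⁻¹' C) := by
  simp [empMeas, Measure.map_apply (hT.iterate _) hC]

theorem isProbabilityMeasure_empMeas (hT : Measurable T) (ν : Measure X) [IsProbabilityMeasure ν]
    {F : Finset ℕ} (hF : F.Nonempty) : IsProbabilityMeasure (empMeas T ν F) := by
  refine ⟨?_⟩
  rw [empMeas_apply hT ν F MeasurableSet.univ]
  simp [ENNReal.inv_mul_cancel (Nat.cast_ne_zero.2 hF.card_pos.ne') (ENNReal.natCast_ne_top _)]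

open scoped Classical in
theorem lintegral_card_filter_iterate_mem (hT : Measurable T) (ν : Measure X) (F : Finset ℕ)
    {C : Set X} (hC : MeasurableSet C) :
    ∫⁻ x, (#{k ∈ F | T^[k] x ∈ C} : ℝ≥0∞) ∂ν = ∑ k ∈ F, ν (T^[k] ⁻¹' C) := by
  simp_rw [card_filter, Nat.cast_sum, Nat.cast_ite, Nat.cast_one, Nat.cast_zero]
  rw [lintegral_finsetSum _ fun k _ => ?_]
  · refine sum_congr rfl fun k _ => ?_
    rw [← lintegral_indicator_one ((hT.iterate k) hC)]
    rfl
  · exact Measurable.ite ((hT.iterate k) hC) measurable_const measurable_const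

open scoped Classical in
theorem empMeas_apply_le (hT : Measurable T) (ν : Measure X) [IsProbabilityMeasure ν]
    (F : Finset ℕ) {C : Set X} (hC : MeasurableSet C) {D : ℝ≥0∞}
    (hD : ∀ᵐ x ∂ν, (#{k ∈ F | T^[k] x ∈ C} : ℝ≥0∞) ≤ D) :
    empMeas T ν F C ≤ (#F : ℝ≥0∞)⁻¹ * D := by
  rw [empMeas_apply hT ν F hC, ← lintegral_card_filter_iterate_mem hT ν F hC]
  gcongr
  exact (lintegral_mono_ae hD).trans (by simp)

end Measure

theorem ncard_div_le_one_of_subset {s : Set ℕ} {F : Finset ℕ} {n : ℕ} (hs : s ⊆ F)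
    (hF : F ⊆ Icc 1 n) : (s.ncard : ℝ) / n ≤ 1 := by
  refine div_le_one_of_le₀ ?_ n.cast_nonneg
  have := (Set.ncard_le_ncard hs F.finite_toSet).trans_eq (Set.ncard_coe_finset F)
  exact_mod_cast this.trans ((card_le_card hF).trans_eq (Nat.card_Icc 1 n))

theorem eventually_forall_ncard_sdiff_div_lt {X : Type*} {As : ℕ → Set X} {S : X → Set ℕ}
    {F : ℕ → Finset ℕ} {𝔫 : ℕ → ℕ} {ε : ℝ} (hFsub : ∀ k, F k ⊆ Icc 1 (𝔫 k))
    (h : limsup (fun k => sSup {r : ℝ | ∃ x ∈ As k,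
      r = (((F k : Set ℕ) \ S x).ncard : ℝ) / 𝔫 k}) atTop < ε) :
    ∀ᶠ k in atTop, ∀ x ∈ As k, (((F k : Set ℕ) \ S x).ncard : ℝ) / 𝔫 k < ε := by
  have hle (k : ℕ) (x : X) : (((F k : Set ℕ) \ S x).ncard : ℝ) / 𝔫 k ≤ 1 :=
    ncard_div_le_one_of_subset Set.sdiff_subset (hFsub k)
  have hbdd (k : ℕ) : 1 ∈ upperBounds {r : ℝ | ∃ x ∈ As k,
      r = (((F k : Set ℕ) \ S x).ncard : ℝ) / 𝔫 k} := by
    rintro _ ⟨x, -, rfl⟩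
    exact hle k x
  have hev := eventually_lt_of_limsup_lt h <|
    isBoundedUnder_of ⟨1, fun k => Real.sSup_le (hbdd k) zero_le_one⟩
  filter_upwards [hev] with k hk x hx
  exact (le_csSup ⟨1, hbdd k⟩ ⟨x, hx, rfl⟩).trans_lt hk

open scoped Classical in
theorem eventually_card_filter_forall_birkhoffSum_lt_le {X : Type*} {T : X → X} {φ : X → ℝ}
    {a δ η K : ℝ} {A : Set X} {E : X → Set ℕ} {𝔫 : ℕ → ℕ} {As : ℕ → Set X}
    {F : ℕ → Finset ℕ}
    (hlarge : ∀ x ∈ A, ∀ k ∈ E x, ∀ l ∈ E x, k < l → (∀ j, k < j → j < l → j ∉ E x) →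
      (l - k : ℝ) * a ≤ ∑ j ∈ Ico k l, φ (T^[j] x))
    (ha : 0 ≤ a) (hδ : 0 < δ) (hη : 0 < η) (hK : ∀ y, |φ y| ≤ K)
    (hAs : ∀ k, As k ⊆ A) (hFsub : ∀ k, F k ⊆ Icc 1 (𝔫 k))
    (hpos : 0 < liminf (fun k => (#(F k) : ℝ) / 𝔫 k) atTop)
    (hFolner : limsup (fun k => ((natBd (F k : Set ℕ)).ncard : ℝ) / 𝔫 k) atTop = 0)
    (hfill : Tendsto (fun M : ℕ => limsup (fun k =>
        sSup {r : ℝ | ∃ x ∈ As k, r = (((F k : Set ℕ) \ thick (E x) M).ncard : ℝ) / 𝔫 k})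
          atTop) atTop (𝓝 0))
    (N₀ : ℕ) :
    ∃ N ≥ N₀, ∃ M, ∀ᶠ k in atTop, ∀ x ∈ As k,
      (#{i ∈ F k | ∀ m ∈ Icc N (N + M), birkhoffSum T φ m (T^[i] x) < (a - δ) * m} : ℝ) ≤
        η * #(F k) := by
  -- The thresholds `η c / 8` and `η c / (4 (R + 1))` below make the count of
  -- `card_filter_forall_birkhoffSum_lt_le` less than `η c 𝔫ₖ / 2 < η #Fₖ`.
  set c := liminf (fun k => (#(F k) : ℝ) / 𝔫 k) atTop
  obtain ⟨M, hM⟩ := (hfill.eventually_lt_const (show 0 < η * c / 8 by positivity)).exists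
  set N := max N₀ ⌈M * K / δ⌉₊
  have hMN : M * K ≤ N * δ := by
    rw [← div_le_iff₀ hδ]
    exact (Nat.le_ceil _).trans (by exact_mod_cast le_max_right _ _)
  refine ⟨N, le_max_left _ _, M, ?_⟩
  set R := N + M
  have hbd_k : ∀ᶠ k in atTop,
      ((natBd (F k : Set ℕ)).ncard : ℝ) / 𝔫 k < η * c / (4 * (R + 1)) :=
    eventually_lt_of_limsup_lt (hFolner ▸ by positivity) <| isBoundedUnder_of
      ⟨1, fun k => ncard_div_le_one_of_subset (fun q hq => hq.1) (hFsub k)⟩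
  have hcard_k : ∀ᶠ k in atTop, c / 2 < (#(F k) : ℝ) / 𝔫 k :=
    eventually_lt_of_lt_liminf (by linarith) (isBoundedUnder_of ⟨0, fun k => by positivity⟩)
  filter_upwards [eventually_forall_ncard_sdiff_div_lt hFsub hM, hbd_k, hcard_k]
    with k hd hb hf x hx
  have hn : (0 : ℝ) < 𝔫 k := by
    rcases (𝔫 k).eq_zero_or_pos with h | h
    · rw [h, Nat.cast_zero, div_zero] at hf; linarith
    · exact_mod_cast h
  have hdx := ((div_lt_iff₀ hn).1 (hd x hx)).le
  rw [div_lt_iff₀ hn] at hb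
  rw [lt_div_iff₀ hn] at hf
  have hcount : (#{i ∈ F k | ∀ m ∈ Icc N (N + M), birkhoffSum T φ m (T^[i] x) < (a - δ) * m} : ℝ)
      ≤ 2 * ((F k : Set ℕ) \ thick (E x) M).ncard + R * (natBd (F k : Set ℕ)).ncard := by
    exact_mod_cast card_filter_forall_birkhoffSum_lt_le (hlarge x (hAs k hx)) ha hδ.le hK hMN (F k)
  have hRb : (R + 1 : ℝ) * (natBd (F k : Set ℕ)).ncard ≤ η * c / 4 * 𝔫 k := by
    calc (R + 1 : ℝ) * (natBd (F k : Set ℕ)).ncard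
        ≤ (R + 1) * (η * c / (4 * (R + 1)) * 𝔫 k) := by gcongr
      _ = η * c / 4 * 𝔫 k := by field_simp
  nlinarith

open scoped Classical in
theorem measure_le_of_le_liminf_empMeas {X : Type*} [MeasurableSpace X] {T : X → X}
    (hT : Measurable T) {μs : ℕ → Measure X} [∀ k, IsProbabilityMeasure (μs k)]
    {As : ℕ → Set X} (hAs : ∀ k, MeasurableSet (As k)) (hμsA : ∀ k, μs k (As k) = 1)
    {F : ℕ → Finset ℕ} {ψ : ℕ → ℕ} (hψ : Tendsto ψ atTop atTop) {μ : Measure X} {C : Set X}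
    (hC : MeasurableSet C)
    (hμ : μ C ≤ liminf (fun j => empMeas T (μs (ψ j)) (F (ψ j)) C) atTop) {η : ℝ≥0}
    (hcount : ∀ᶠ k in atTop, ∀ x ∈ As k, (#{i ∈ F k | T^[i] x ∈ C} : ℝ) ≤ η * #(F k)) :
    μ C ≤ η := by
  suffices hk : ∀ᶠ k in atTop, empMeas T (μs k) (F k) C ≤ η from
    hμ.trans (liminf_le_of_frequently_le (hψ.eventually hk).frequently)
  filter_upwards [hcount] with k hk
  have hae : ∀ᵐ x ∂μs k, x ∈ As k :=
    (ae_mem_iff_measure_eq (hAs k).nullMeasurableSet).2 (by simp [hμsA])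
  refine (empMeas_apply_le hT (μs k) (F k) hC (D := η * #(F k))
    (hae.mono fun x hx => by exact_mod_cast hk x hx)).trans ?_
  rcases eq_or_ne #(F k) 0 with h | h
  · simp [h]
  · rw [mul_comm (η : ℝ≥0∞), ← mul_assoc,
      ENNReal.inv_mul_cancel (Nat.cast_ne_zero.2 h) (ENNReal.natCast_ne_top _), one_mul]

theorem ae_frequently_of_forall_measure_le {X : Type*} [MeasurableSpace X] {μ : Measure X}
    {p : ℕ → X → Prop}
    (h : ∀ η : ℝ≥0, 0 < η → ∀ N₀, ∃ N ≥ N₀, ∃ L, μ {y | ∀ m ∈ Icc N L, ¬ p m y} ≤ η) :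
    ∀ᵐ y ∂μ, ∃ᶠ m in atTop, p m y := by
  have hunion : {y | ¬ ∃ᶠ m in atTop, p m y} = ⋃ N₀, {y | ∀ m ≥ N₀, ¬ p m y} := by
    ext; simp [not_frequently, eventually_atTop]
  rw [ae_iff, hunion, measure_iUnion_null_iff]
  refine fun N₀ => le_antisymm (ENNReal.le_of_forall_pos_le_add fun η hη _ => ?_) zero_le
  obtain ⟨N, hN, L, hle⟩ := h η hη N₀
  rw [zero_add]
  refine (measure_mono fun y hy m hm => ?_).trans hle
  exact hy m (hN.trans (mem_Icc.1 hm).1)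

theorem isOpen_setOf_forall_birkhoffSum_lt {X : Type*} [TopologicalSpace X] {T : X → X}
    {φ : X → ℝ} (hT : Continuous T) (hφ : Continuous φ) (c : ℝ) (s : Finset ℕ) :
    IsOpen {y | ∀ m ∈ s, birkhoffSum T φ m y < c * m} := by
  simp only [Set.ofPred_forall]
  exact isOpen_biInter_finset fun m _ =>
    isOpen_lt (continuous_finsetSum _ fun j _ => hφ.comp (hT.iterate j)) continuous_const

theorem le_limsup_birkhoffSum_div {X : Type*} {T : X → X} {φ : X → ℝ} {K a : ℝ}
    (hK : ∀ y, |φ y| ≤ K) {x : X}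
    (h : ∀ p : ℕ, ∃ᶠ m in atTop, (a - 1 / (p + 1)) * m ≤ birkhoffSum T φ m x) :
    a ≤ limsup (fun n => birkhoffSum T φ n x / n) atTop := by
  have hbdd : IsBoundedUnder (· ≤ ·) atTop fun n : ℕ => birkhoffSum T φ n x / n := by
    refine isBoundedUnder_of ⟨K, fun n => div_le_of_le_mul₀ n.cast_nonneg
      ((abs_nonneg _).trans (hK x)) ?_⟩
    exact (sum_le_card_nsmul _ _ K fun j _ => (le_abs_self _).trans (hK _)).trans_eq
      (by simp [mul_comm])
  refine le_of_forall_lt fun b hb => ?_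
  obtain ⟨p, hp⟩ := exists_nat_one_div_lt (sub_pos.2 hb)
  have hfreq : ∃ᶠ m in atTop, a - 1 / (p + 1) ≤ birkhoffSum T φ m x / m :=
    ((h p).and_eventually (eventually_gt_atTop 0)).mono fun m ⟨hm, hm0⟩ =>
      (le_div_iff₀ (by exact_mod_cast hm0)).2 hm
  linarith [le_limsup_of_frequently_le hfreq hbdd]

theorem stmt4_general {X : Type*} [TopologicalSpace X] [CompactSpace X]
    [TopologicalSpace.MetrizableSpace X] [MeasurableSpace X] [BorelSpace X]
    (T : X → X) (hT : Continuous T)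
    (φ : X → ℝ) (hφc : Continuous φ) (a : ℝ) (ha : 0 < a)
    (A : Set X) (E : X → Set ℕ)
    (hlarge : ∀ x ∈ A, ∀ k ∈ E x, ∀ l ∈ E x, k < l → (∀ j, k < j → j < l → j ∉ E x) →
      (l - k : ℝ) * a ≤ ∑ j ∈ Finset.Ico k l, φ (T^[j] x))
    (𝔫 : ℕ → ℕ)
    (As : ℕ → Set X) (hAs : ∀ k, MeasurableSet (As k) ∧ As k ⊆ A)
    (F : ℕ → Finset ℕ) (hFsub : ∀ k, F k ⊆ Finset.Icc 1 (𝔫 k)) (hFne : ∀ k, (F k).Nonempty)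
    (hpos : 0 < liminf (fun k => ((F k).card : ℝ) / (𝔫 k : ℝ)) atTop)
    (hFolner : limsup (fun k => ((natBd (F k : Set ℕ)).ncard : ℝ) / (𝔫 k : ℝ)) atTop = 0)
    (hfill : Tendsto (fun M : ℕ => limsup (fun k =>
        sSup {r : ℝ | ∃ x ∈ As k,
          r = (((F k : Set ℕ) \ thick (E x) M).ncard : ℝ) / (𝔫 k : ℝ)}) atTop)
      atTop (nhds 0))
    (μs : ℕ → Measure X) (hμs : ∀ k, IsProbabilityMeasure (μs k))
    (hμsA : ∀ k, μs k (As k) = 1)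
    (ψ : ℕ → ℕ) (hψ : StrictMono ψ)
    (μ : Measure X) [IsProbabilityMeasure μ]
    (hlim : ∀ g : C(X, ℝ),
      Tendsto (fun j => ∫ x, g x ∂(empMeas T (μs (ψ j)) (F (ψ j)))) atTop
        (𝓝 (∫ x, g x ∂μ))) :
    ∀ᵐ x ∂μ, a ≤ limsup (fun n => (∑ k ∈ Finset.range n, φ (T^[k] x)) / (n : ℝ)) atTop := by
  obtain ⟨K, hK⟩ := isCompact_univ.exists_bound_of_continuousOn hφc.continuousOn
  replace hK : ∀ y, |φ y| ≤ K := fun y => hK y (Set.mem_univ y)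
  have := hμs
  let ν : ℕ → ProbabilityMeasure X := fun j =>
    ⟨empMeas T (μs (ψ j)) (F (ψ j)), isProbabilityMeasure_empMeas hT.measurable _ (hFne _)⟩
  have hν : Tendsto ν atTop (𝓝 ⟨μ, ‹_›⟩) :=
    ProbabilityMeasure.tendsto_iff_forall_integral_tendsto.2 fun g => hlim g.toContinuousMap
  have hfreq (p : ℕ) : ∀ᵐ y ∂μ, ∃ᶠ m in atTop, (a - 1 / (p + 1)) * m ≤ birkhoffSum T φ m y := by
    refine ae_frequently_of_forall_measure_le fun η hη N₀ => ?_
    obtain ⟨N, hN, M, hcount⟩ := eventually_card_filter_forall_birkhoffSum_lt_le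
      (δ := 1 / (p + 1)) (η := η) hlarge ha.le (by positivity) hη hK (fun k => (hAs k).2) hFsub
      hpos hFolner hfill N₀
    have hU := isOpen_setOf_forall_birkhoffSum_lt hT hφc (a - 1 / (p + 1)) (Icc N (N + M))
    refine ⟨N, hN, N + M, ?_⟩
    simp only [not_le]
    -- `convert` only has to reconcile the decidability instances of the two filters.
    exact measure_le_of_le_liminf_empMeas hT.measurable (fun k => (hAs k).1) hμsA
      hψ.tendsto_atTop hU.measurableSet
      (ProbabilityMeasure.le_liminf_measure_open_of_tendsto hν hU) (by convert hcount; rfl)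
  filter_upwards [ae_all_iff.2 hfreq] with y hy
  exact le_limsup_birkhoffSum_div hK hy

/-- Positive exponent of empirical measures for additive cocycles: if `E` is `a`-large on `A`
(with `a > 0`), the `Fₙ` form a Følner sequence filled with `E` uniformly on `Aₙ`, and
`μₙ(Aₙ) = 1`, then any weak-* limit `μ` of a subsequence of `μₙ^{Fₙ}` satisfies
`limsup (1/n) ∑_{k<n} φ(T^k x) ≥ a` for `μ`-a.e. `x`. -/
theorem stmt4 {X : Type*} [TopologicalSpace X] [CompactSpace X]
    [TopologicalSpace.MetrizableSpace X] [MeasurableSpace X] [BorelSpace X]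
    (T : X → X) (hT : Continuous T)
    (φ : X → ℝ) (hφc : Continuous φ) (a : ℝ) (ha : 0 < a)
    (A : Set X) (hA : MeasurableSet A) (E : X → Set ℕ)
    (hlarge : ∀ x ∈ A, ∀ k ∈ E x, ∀ l ∈ E x, k < l → (∀ j, k < j → j < l → j ∉ E x) →
      (l - k : ℝ) * a ≤ ∑ j ∈ Finset.Ico k l, φ (T^[j] x))
    (𝔫 : ℕ → ℕ) (h𝔫 : StrictMono 𝔫)
    (As : ℕ → Set X) (hAs : ∀ k, MeasurableSet (As k) ∧ As k ⊆ A)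
    (F : ℕ → Finset ℕ) (hFsub : ∀ k, F k ⊆ Finset.Icc 1 (𝔫 k)) (hFne : ∀ k, (F k).Nonempty)
    (hFbd : ∀ k, ∀ x ∈ As k, natBd (F k : Set ℕ) ⊆ E x)
    (hpos : 0 < liminf (fun k => ((F k).card : ℝ) / (𝔫 k : ℝ)) atTop)
    (hFolner : limsup (fun k => ((natBd (F k : Set ℕ)).ncard : ℝ) / (𝔫 k : ℝ)) atTop = 0)
    (hfill : Tendsto (fun M : ℕ => limsup (fun k =>
        sSup {r : ℝ | ∃ x ∈ As k,
          r = (((F k : Set ℕ) \ thick (E x) M).ncard : ℝ) / (𝔫 k : ℝ)}) atTop)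
      atTop (nhds 0))
    (μs : ℕ → Measure X) (hμs : ∀ k, IsProbabilityMeasure (μs k))
    (hμsA : ∀ k, μs k (As k) = 1)
    (ψ : ℕ → ℕ) (hψ : StrictMono ψ)
    (μ : Measure X) [IsProbabilityMeasure μ]
    (hlim : ∀ g : C(X, ℝ),
      Tendsto (fun j => ∫ x, g x ∂(empMeas T (μs (ψ j)) (F (ψ j)))) atTop
        (𝓝 (∫ x, g x ∂μ))) :
    ∀ᵐ x ∂μ, a ≤ limsup (fun n => (∑ k ∈ Finset.range n, φ (T^[k] x)) / (n : ℝ)) atTop :=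
  stmt4_general T hT φ hφc a ha A E hlarge 𝔫 As hAs F hFsub hFne hpos hFolner hfill μs hμs hμsA ψ hψ
    μ hlim
end

section
/- Let (X,T) be a topological system, 𝔫 ⊆ ℕ infinite, and for n ∈ 𝔫 let F_n ⊆ {1,…,n} be nonempty and μ_n a Borel probability measure on X. Then for every finite Borel partition P of X and every integer m ≥ 1 one has, for all n ∈ 𝔫: (1/m) H_{μ_n^{F_n}}(P^m) ≥ (1/#F_n) H_{μ_n}(P^{F_n}) − 3m (#(∂F_n)/#F_n) log #P. -/
open Filter MeasureTheory Topology
open scoped ENNReal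

/-- A finite Borel partition of `X`. -/
def IsFinPartition {X : Type*} [MeasurableSpace X] (P : Finset (Set X)) : Prop :=
  (∀ s ∈ P, MeasurableSet s) ∧ (P : Set (Set X)).PairwiseDisjoint id ∧
    ⋃₀ (P : Set (Set X)) = Set.univ

/-- The iterated partition `P^F = ⋁_{k ∈ F} T^{-k} P`. -/
noncomputable def iterP {X : Type*} (T : X → X) (P : Finset (Set X)) (F : Finset ℕ) :
    Finset (Set X) := by
  classical
  exact (F.pi (fun _ => P)).image (fun g => ⋂ k, ⋂ (h : k ∈ F), (T^[k]) ⁻¹' g k h)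

/-- The static entropy `H_ν(P) = -∑_{A ∈ P} ν(A) log ν(A)`. -/
noncomputable def statEnt {X : Type*} [MeasurableSpace X] (ν : Measure X)
    (P : Finset (Set X)) : ℝ :=
  ∑ s ∈ P, Real.negMulLog (ν s).toReal


/-!
Write `H(G)` for the `μ`-entropy of `P^G`, i.e. of the itinerary map
`x ↦ (cell of T^k x)_{k ∈ G}`. It is monotone and subadditive in `G`, `H(G) ≤ #G log #P`,
and on a block `[k, k + m)` it is at most the `T^k_* μ`-entropy of `P^m`. For each residue
`j` mod `m`, `F` is covered by the `m`-blocks starting at the points of `F` congruent to `j`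
together with the `m`-blocks starting at points of `∂F`, so
`H(F) ≤ m #∂F log #P + ∑_{k ∈ F, k ≡ j} H([k, k + m))`. Summing over `j` and using concavity
of entropy in the measure gives `m H(F) ≤ m² #∂F log #P + #F H_{μ^F}(P^m)`.
-/

open Real Finset

namespace Real

lemma negMulLog_add_mul_log_le {p q : ℝ} (hp : 0 ≤ p) (hq : 0 < q) :
    negMulLog p + p * log q ≤ q - p := by
  rcases hp.eq_or_lt with rfl | hp
  · simpa using hq.le
  have h := mul_le_mul_of_nonneg_left (log_le_sub_one_of_pos (div_pos hq hp)) hp.le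
  rw [log_div hq.ne' hp.ne', mul_sub_one, mul_div_cancel₀ _ hp.ne'] at h
  rw [negMulLog]
  linarith

lemma negMulLog_add_mul_log_add_mul_log_le {p a b : ℝ} (hp : 0 ≤ p) (ha : p ≤ a)
    (hb : p ≤ b) :
    negMulLog p + p * log a + p * log b ≤ a * b - p := by
  rcases hp.eq_or_lt with rfl | hp
  · simpa using mul_nonneg ha hb
  have h := negMulLog_add_mul_log_le hp.le (mul_pos (hp.trans_le ha) (hp.trans_le hb))
  rwa [log_mul (hp.trans_le ha).ne' (hp.trans_le hb).ne', mul_add, ← add_assoc] at h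

lemma negMulLog_sum_le {ι : Type*} {s : Finset ι} {x : ι → ℝ} (hx : ∀ i ∈ s, 0 ≤ x i) :
    negMulLog (∑ i ∈ s, x i) ≤ ∑ i ∈ s, negMulLog (x i) := by
  simp only [negMulLog_eq_neg, sum_mul, ← sum_neg_distrib]
  refine sum_le_sum fun i hi => neg_le_neg ?_
  rcases (hx i hi).eq_or_lt with h | h
  · simp [← h]
  · exact mul_le_mul_of_nonneg_left (log_le_log h (single_le_sum hx hi)) h.le

lemma sum_negMulLog_le_log_card {ι : Type*} {s : Finset ι} {p : ι → ℝ}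
    (hp : ∀ i ∈ s, 0 ≤ p i) (hsum : ∑ i ∈ s, p i = 1) :
    ∑ i ∈ s, negMulLog (p i) ≤ log #s := by
  have hs : (0 : ℝ) < #s := by
    exact_mod_cast card_pos.2 (nonempty_of_sum_ne_zero (by rw [hsum]; exact one_ne_zero))
  have h := sum_le_sum fun i hi => negMulLog_add_mul_log_le (hp i hi) (inv_pos.2 hs)
  rw [sum_add_distrib, ← sum_mul, sum_sub_distrib, hsum, sum_const, nsmul_eq_mul,
    mul_inv_cancel₀ hs.ne', log_inv] at h
  linarith

end Real

section ShannonEntropy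

variable {X β γ : Type*} [MeasurableSpace X] [Fintype β] [Fintype γ]

noncomputable def shannonEntropy (ν : Measure X) (f : X → β) : ℝ :=
  ∑ b, negMulLog (ν.real (f ⁻¹' {b}))

variable {ν : Measure X} {f : X → β} {g : X → γ}

lemma sum_measureReal_fiber [IsFiniteMeasure ν] (hf : ∀ b, MeasurableSet (f ⁻¹' {b})) :
    ∑ b, ν.real (f ⁻¹' {b}) = ν.real Set.univ := by
  rw [sum_measureReal_preimage_singleton _ fun b _ => hf b, coe_univ, Set.preimage_univ]

lemma sum_measureReal_inter_fiber [IsFiniteMeasure ν] (hg : ∀ c, MeasurableSet (g ⁻¹' {c}))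
    (A : Set X) : ∑ c, ν.real (A ∩ g ⁻¹' {c}) = ν.real A := by
  simp_rw [Set.inter_comm A, ← measureReal_restrict_apply (hg _)]
  rw [sum_measureReal_fiber hg, measureReal_restrict_apply_univ]

lemma shannonEntropy_comp_le [IsFiniteMeasure ν] (hf : ∀ b, MeasurableSet (f ⁻¹' {b}))
    (φ : β → γ) : shannonEntropy ν (φ ∘ f) ≤ shannonEntropy ν f := by
  classical
  have hfiber (c : γ) :
      ν.real ((φ ∘ f) ⁻¹' {c}) = ∑ b with φ b = c, ν.real (f ⁻¹' {b}) := by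
    rw [sum_measureReal_preimage_singleton _ fun b _ => hf b, Set.preimage_comp]
    congr 2
    ext b
    simp
  calc shannonEntropy ν (φ ∘ f)
      ≤ ∑ c, ∑ b with φ b = c, negMulLog (ν.real (f ⁻¹' {b})) :=
        sum_le_sum fun c _ => (hfiber c).symm ▸ negMulLog_sum_le fun _ _ => measureReal_nonneg
    _ = shannonEntropy ν f := sum_fiberwise _ _ _

/-- Subadditivity, from Gibbs' inequality against the product of the marginals. -/
lemma shannonEntropy_pair_le [IsProbabilityMeasure ν] (hf : ∀ b, MeasurableSet (f ⁻¹' {b}))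
    (hg : ∀ c, MeasurableSet (g ⁻¹' {c})) :
    shannonEntropy ν (fun x => (f x, g x)) ≤ shannonEntropy ν f + shannonEntropy ν g := by
  set p : β → γ → ℝ := fun b c => ν.real (f ⁻¹' {b} ∩ g ⁻¹' {c})
  set a : β → ℝ := fun b => ν.real (f ⁻¹' {b})
  set a' : γ → ℝ := fun c => ν.real (g ⁻¹' {c})
  have hrow : ∀ b, ∑ c, p b c = a b := fun b => sum_measureReal_inter_fiber hg _
  have hcol : ∀ c, ∑ b, p b c = a' c := fun c => by
    simp_rw [p, Set.inter_comm (f ⁻¹' _)]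
    exact sum_measureReal_inter_fiber hf _
  have hpair : shannonEntropy ν (fun x => (f x, g x)) = ∑ b, ∑ c, negMulLog (p b c) := by
    rw [shannonEntropy, Fintype.sum_prod_type]
    congr! 4 with b - c -
    ext x
    simp [Prod.ext_iff]
  have hgibbs := sum_le_sum fun b (_ : b ∈ univ) => sum_le_sum fun c (_ : c ∈ univ) =>
    negMulLog_add_mul_log_add_mul_log_le (a := a b) (b := a' c) measureReal_nonneg
      (measureReal_mono Set.inter_subset_left) (measureReal_mono Set.inter_subset_right)
  have hlhs : ∑ b, ∑ c, (negMulLog (p b c) + p b c * log (a b) + p b c * log (a' c)) =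
      shannonEntropy ν (fun x => (f x, g x)) - shannonEntropy ν f - shannonEntropy ν g := by
    simp only [sum_add_distrib, ← sum_mul, hrow, hpair]
    rw [sum_comm (f := fun b c => p b c * log (a' c))]
    simp only [← sum_mul, hcol, shannonEntropy, negMulLog, a, a']
    simp only [neg_mul, sum_neg_distrib]
    ring
  have hrhs : ∑ b, ∑ c, (a b * a' c - p b c) = 0 := by
    simp only [sum_sub_distrib, ← mul_sum, ← sum_mul, hrow, a, a', sum_measureReal_fiber hf,
      sum_measureReal_fiber hg, probReal_univ]
    norm_num
  linarith

lemma shannonEntropy_le_log_card [IsProbabilityMeasure ν]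
    (hf : ∀ b, MeasurableSet (f ⁻¹' {b})) :
    shannonEntropy ν f ≤ log (Fintype.card β) :=
  sum_negMulLog_le_log_card (fun _ _ => measureReal_nonneg)
    ((sum_measureReal_fiber hf).trans probReal_univ)

lemma shannonEntropy_map {h : X → X} (hh : Measurable h)
    (hf : ∀ b, MeasurableSet (f ⁻¹' {b})) :
    shannonEntropy (ν.map h) f = shannonEntropy ν (f ∘ h) := by
  simp only [shannonEntropy, map_measureReal_apply hh (hf _), Set.preimage_comp]

lemma sum_shannonEntropy_le_card_mul {ι : Type*} (s : Finset ι)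
    (ν : ι → Measure X) [∀ i, IsFiniteMeasure (ν i)] :
    ∑ i ∈ s, shannonEntropy (ν i) f ≤
      #s * shannonEntropy ((#s : ℝ≥0∞)⁻¹ • ∑ i ∈ s, ν i) f := by
  rcases s.eq_empty_or_nonempty with rfl | hs
  · simp
  have hs' : (0 : ℝ) < #s := by exact_mod_cast hs.card_pos
  simp only [shannonEntropy, mul_sum]
  rw [sum_comm]
  refine sum_le_sum fun b _ => ?_
  have hJ := concaveOn_negMulLog.le_map_sum (t := s) (w := fun _ => (#s : ℝ)⁻¹)
    (p := fun i => (ν i).real (f ⁻¹' {b})) (fun _ _ => by positivity)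
    (by rw [sum_const, nsmul_eq_mul, mul_inv_cancel₀ hs'.ne'])
    (fun _ _ => measureReal_nonneg)
  have havg : ((#s : ℝ≥0∞)⁻¹ • ∑ i ∈ s, ν i).real (f ⁻¹' {b})
      = ∑ i ∈ s, (#s : ℝ)⁻¹ • (ν i).real (f ⁻¹' {b}) := by
    rw [measureReal_def, Measure.smul_apply, Measure.finsetSum_apply, smul_eq_mul,
      ENNReal.toReal_mul, ENNReal.toReal_sum fun i _ => measure_ne_top _ _, ENNReal.toReal_inv,
      ENNReal.toReal_natCast, mul_sum]
    rfl
  rw [havg, ← mul_le_mul_iff_right₀ (inv_pos.2 hs'), mul_sum, inv_mul_cancel_left₀ hs'.ne']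
  simpa only [smul_eq_mul] using hJ

end ShannonEntropy

def natBdFinset (F : Finset ℕ) : Finset ℕ := F.filter fun n => n - 1 ∉ F ∨ n + 1 ∉ F

lemma ncard_natBd (F : Finset ℕ) : (natBd (F : Set ℕ)).ncard = #(natBdFinset F) := by
  rw [← Set.ncard_coe_finset]
  congr 1
  ext n
  simp [natBd, natBdFinset]

/-- Because `0 ∉ F`, the largest `t ≤ i` outside `F` exists; `t + 1` starts the run of `F`
containing `i`. -/
lemma exists_mem_natBdFinset_Icc_subset {F : Finset ℕ} (h0 : 0 ∉ F) {i : ℕ} (hi : i ∈ F) :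
    ∃ a ∈ natBdFinset F, a ≤ i ∧ Icc a i ⊆ F := by
  classical
  set t := Nat.findGreatest (· ∉ F) i
  have ht : t ∉ F := Nat.findGreatest_spec (P := (· ∉ F)) (Nat.zero_le i) h0
  have hti : t < i := lt_of_le_of_ne (Nat.findGreatest_le i) fun h => ht (h ▸ hi)
  have hrun : Icc (t + 1) i ⊆ F := fun n hn => by
    have := mem_Icc.1 hn
    exact not_not.1 (Nat.findGreatest_is_greatest (P := (· ∉ F)) (by omega) this.2)
  exact ⟨t + 1, mem_filter.2 ⟨hrun (mem_Icc.2 ⟨le_rfl, hti⟩), Or.inl ht⟩, hti, hrun⟩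

lemma subset_biUnion_Ico_union_biUnion_Ico {F : Finset ℕ} (h0 : 0 ∉ F) {m j : ℕ}
    (hj : j < m) :
    F ⊆ (natBdFinset F).biUnion (fun a => Ico a (a + m)) ∪
      {k ∈ F | k % m = j}.biUnion (fun k => Ico k (k + m)) := by
  intro i hi
  obtain ⟨a, ha, hai, hrun⟩ := exists_mem_natBdFinset_Icc_subset h0 hi
  rw [mem_union, mem_biUnion, mem_biUnion]
  by_cases hia : i < a + m
  · exact Or.inl ⟨a, ha, mem_Ico.2 ⟨hai, hia⟩⟩
  have hmod := Nat.mod_lt (i - j) (hj.trans_le' (Nat.zero_le j))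
  have hdiv := Nat.div_add_mod (i - j) m
  refine Or.inr ⟨j + m * ((i - j) / m), mem_filter.2 ⟨hrun (mem_Icc.2 ⟨by omega, by omega⟩), ?_⟩,
    mem_Ico.2 ⟨by omega, by omega⟩⟩
  rw [Nat.add_mul_mod_self_left, Nat.mod_eq_of_lt hj]

namespace IsFinPartition

variable {X : Type*} [MeasurableSpace X] {P : Finset (Set X)} (hP : IsFinPartition P)

include hP in
lemma exists_mem (x : X) : ∃ A ∈ P, x ∈ A := by
  have hx : x ∈ ⋃₀ (P : Set (Set X)) := hP.2.2 ▸ Set.mem_univ x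
  simpa using hx

noncomputable def cell (x : X) : P :=
  ⟨(hP.exists_mem x).choose, (hP.exists_mem x).choose_spec.1⟩

lemma cell_eq_iff {x : X} {A : P} : hP.cell x = A ↔ x ∈ (A : Set X) := by
  refine ⟨fun h => h ▸ (hP.exists_mem x).choose_spec.2, fun hx => ?_⟩
  by_contra hne
  exact Set.disjoint_left.1 (hP.2.1 (hP.cell x).2 A.2 (Subtype.coe_injective.ne hne))
    (hP.exists_mem x).choose_spec.2 hx

/-- Its fibers are the cells of `iterP T P F`. -/
noncomputable def itinerary (T : X → X) (F : Finset ℕ) (x : X) : F → P :=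
  fun k => hP.cell (T^[k] x)

variable {T : X → X}

section Cells

variable {F : Finset ℕ}

lemma itinerary_preimage_singleton (c : F → P) :
    hP.itinerary T F ⁻¹' {c} = ⋂ k : F, T^[k] ⁻¹' c k := by
  ext x
  simp [itinerary, funext_iff, hP.cell_eq_iff]

lemma measurableSet_itinerary_preimage (hT : Measurable T) (c : F → P) :
    MeasurableSet (hP.itinerary T F ⁻¹' {c}) := by
  rw [itinerary_preimage_singleton]
  exact .iInter fun k => hT.iterate k (hP.1 _ (c k).2)

lemma iterP_eq_image_fiber :
    iterP T P F = univ.image fun c : F → P => hP.itinerary T F ⁻¹' {c} := by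
  classical
  ext A
  simp only [iterP, mem_image, mem_univ, true_and, hP.itinerary_preimage_singleton,
    Set.iInter_subtype]
  constructor
  · rintro ⟨g, hg, rfl⟩
    exact ⟨fun k => ⟨g k k.2, mem_pi.1 hg k k.2⟩, rfl⟩
  · rintro ⟨c, rfl⟩
    exact ⟨fun k hk => c ⟨k, hk⟩, mem_pi.2 fun k hk => (c ⟨k, hk⟩).2, rfl⟩

lemma statEnt_iterP (ν : Measure X) :
    statEnt ν (iterP T P F) = shannonEntropy ν (hP.itinerary T F) := by
  classical
  rw [statEnt, hP.iterP_eq_image_fiber, sum_image_of_disjoint (by simp)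
    ((Set.pairwiseDisjoint_fiber _ _).subset (Set.subset_univ _))]
  rfl

end Cells

section Entropy

variable (hT : Measurable T) (μ : Measure X)
include hT

lemma shannonEntropy_itinerary_mono [IsFiniteMeasure μ] {F G : Finset ℕ} (hFG : F ⊆ G) :
    shannonEntropy μ (hP.itinerary T F) ≤ shannonEntropy μ (hP.itinerary T G) :=
  shannonEntropy_comp_le (hP.measurableSet_itinerary_preimage hT)
    fun (c : G → P) (k : F) => c ⟨k, hFG k.2⟩

lemma shannonEntropy_itinerary_union_le [IsProbabilityMeasure μ] (F G : Finset ℕ) :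
    shannonEntropy μ (hP.itinerary T (F ∪ G)) ≤
      shannonEntropy μ (hP.itinerary T F) + shannonEntropy μ (hP.itinerary T G) := by
  have hF := hP.measurableSet_itinerary_preimage (F := F) hT
  have hG := hP.measurableSet_itinerary_preimage (F := G) hT
  let glue : (F → P) × (G → P) → (F ∪ G : Finset ℕ) → P := fun c k =>
    if h : k.1 ∈ F then c.1 ⟨k, h⟩ else c.2 ⟨k, (mem_union.1 k.2).resolve_left h⟩
  have hglue : hP.itinerary T (F ∪ G) =
      glue ∘ fun x => (hP.itinerary T F x, hP.itinerary T G x) := by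
    ext x k
    by_cases h : k.1 ∈ F <;> simp [glue, h, itinerary]
  rw [hglue]
  refine (shannonEntropy_comp_le (fun ⟨b, c⟩ => ?_) glue).trans (shannonEntropy_pair_le hF hG)
  rw [← Set.singleton_prod_singleton, Set.mk_preimage_prod]
  exact (hF b).inter (hG c)

lemma shannonEntropy_itinerary_le [IsProbabilityMeasure μ] (F : Finset ℕ) :
    shannonEntropy μ (hP.itinerary T F) ≤ #F * log #P := by
  classical
  refine (shannonEntropy_le_log_card (hP.measurableSet_itinerary_preimage hT)).trans_eq ?_
  rw [Fintype.card_fun, Fintype.card_coe, Fintype.card_coe, Nat.cast_pow, log_pow]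

lemma shannonEntropy_itinerary_biUnion_le [IsProbabilityMeasure μ] {ι : Type*} (s : Finset ι)
    (F : ι → Finset ℕ) :
    shannonEntropy μ (hP.itinerary T (s.biUnion F)) ≤
      ∑ i ∈ s, shannonEntropy μ (hP.itinerary T (F i)) := by
  classical
  induction s using Finset.induction_on with
  | empty =>
    rw [biUnion_empty, sum_empty]
    simpa using hP.shannonEntropy_itinerary_le hT μ ∅
  | insert i s hi ih =>
    rw [biUnion_insert, sum_insert hi]
    exact (hP.shannonEntropy_itinerary_union_le hT μ _ _).trans (by gcongr)

/-- An itinerary along a block `[k, k + m)` is the `range m`-itinerary of `T^[k] x`. -/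
lemma shannonEntropy_itinerary_Ico_le [IsFiniteMeasure μ] (k m : ℕ) :
    shannonEntropy μ (hP.itinerary T (Ico k (k + m))) ≤
      shannonEntropy (μ.map T^[k]) (hP.itinerary T (range m)) := by
  let shift : (range m → P) → Ico k (k + m) → P := fun c j =>
    c ⟨j - k, mem_range.2 (by have := mem_Ico.1 j.2; omega)⟩
  have hshift :
      hP.itinerary T (Ico k (k + m)) = shift ∘ hP.itinerary T (range m) ∘ T^[k] := by
    ext x j
    have := mem_Ico.1 j.2
    simp only [itinerary, Function.comp_apply, shift, ← Function.iterate_add_apply,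
      Nat.sub_add_cancel this.1]
  have hfiber (c : range m → P) :
      MeasurableSet ((hP.itinerary T (range m) ∘ T^[k]) ⁻¹' {c}) :=
    (hP.measurableSet_itinerary_preimage hT c).preimage (hT.iterate k)
  rw [hshift, shannonEntropy_map (hT.iterate k) (hP.measurableSet_itinerary_preimage hT)]
  exact shannonEntropy_comp_le hfiber shift

/-- Summing the covering bound over the residue `j` counts every block starting in `F` once. -/
lemma mul_shannonEntropy_itinerary_le [IsProbabilityMeasure μ] {F : Finset ℕ} (h0 : 0 ∉ F)
    {m : ℕ} (hm : 0 < m) :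
    m * shannonEntropy μ (hP.itinerary T F) ≤
      m * (m * #(natBdFinset F) * log #P) +
        ∑ k ∈ F, shannonEntropy μ (hP.itinerary T (Ico k (k + m))) := by
  set H := fun G => shannonEntropy μ (hP.itinerary T G)
  have hblock (a : ℕ) : H (Ico a (a + m)) ≤ m * log #P := by
    simpa using hP.shannonEntropy_itinerary_le hT μ (Ico a (a + m))
  have hresidue (j : ℕ) (hj : j ∈ range m) :
      H F ≤ m * #(natBdFinset F) * log #P + ∑ k ∈ F with k % m = j, H (Ico k (k + m)) := by
    set D := (natBdFinset F).biUnion fun a => Ico a (a + m)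
    set U := {k ∈ F | k % m = j}.biUnion fun k => Ico k (k + m)
    have hD : H D ≤ m * #(natBdFinset F) * log #P := calc
      H D ≤ ∑ a ∈ natBdFinset F, H (Ico a (a + m)) :=
        hP.shannonEntropy_itinerary_biUnion_le hT μ _ _
      _ ≤ ∑ a ∈ natBdFinset F, m * log #P := sum_le_sum fun a _ => hblock a
      _ = m * #(natBdFinset F) * log #P := by rw [sum_const, nsmul_eq_mul]; ring
    calc H F ≤ H (D ∪ U) := hP.shannonEntropy_itinerary_mono hT μ
          (subset_biUnion_Ico_union_biUnion_Ico h0 (mem_range.1 hj))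
      _ ≤ H D + H U := hP.shannonEntropy_itinerary_union_le hT μ D U
      _ ≤ _ := add_le_add hD (hP.shannonEntropy_itinerary_biUnion_le hT μ _ _)
  calc m * H F = ∑ _j ∈ range m, H F := by rw [sum_const, card_range, nsmul_eq_mul]
    _ ≤ ∑ j ∈ range m,
          (m * #(natBdFinset F) * log #P + ∑ k ∈ F with k % m = j, H (Ico k (k + m))) :=
      sum_le_sum hresidue
    _ = _ := by
      rw [sum_add_distrib, sum_fiberwise_of_maps_to fun k _ => mem_range.2 (Nat.mod_lt k hm),
        sum_const, card_range, nsmul_eq_mul]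

include hP in
lemma mul_statEnt_iterP_le [IsProbabilityMeasure μ] {F : Finset ℕ} (h0 : 0 ∉ F)
    {m : ℕ} (hm : 0 < m) :
    m * statEnt μ (iterP T P F) ≤
      m * (m * #(natBdFinset F) * log #P) +
        #F * statEnt (empMeas T μ F) (iterP T P (range m)) := by
  simp only [hP.statEnt_iterP]
  calc _ ≤ _ := hP.mul_shannonEntropy_itinerary_le hT μ h0 hm
    _ ≤ m * (m * #(natBdFinset F) * log #P) +
        ∑ k ∈ F, shannonEntropy (μ.map T^[k]) (hP.itinerary T (range m)) := by
      gcongr with k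
      exact hP.shannonEntropy_itinerary_Ico_le hT μ k m
    _ ≤ _ := by
      gcongr
      exact sum_shannonEntropy_le_card_mul _ _

end Entropy

end IsFinPartition

theorem stmt5_general {X : Type*} [TopologicalSpace X] [MeasurableSpace X] [BorelSpace X]
    (T : X → X) (hT : Continuous T)
    (𝔫 : ℕ → ℕ)
    (F : ℕ → Finset ℕ) (hFsub : ∀ k, F k ⊆ Finset.Icc 1 (𝔫 k)) (hFne : ∀ k, (F k).Nonempty)
    (μs : ℕ → Measure X) (hμs : ∀ k, IsProbabilityMeasure (μs k))
    (P : Finset (Set X)) (hP : IsFinPartition P)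
    (m : ℕ) (hm : 1 ≤ m) :
    ∀ k : ℕ,
      statEnt (μs k) (iterP T P (F k)) / ((F k).card : ℝ)
        - 3 * (m : ℝ) * (((natBd ((F k) : Set ℕ)).ncard : ℝ) / ((F k).card : ℝ))
            * Real.log (P.card : ℝ)
      ≤ statEnt (empMeas T (μs k) (F k)) (iterP T P (Finset.range m)) / (m : ℝ) := by
  intro n
  have := hμs n
  have hkey := hP.mul_statEnt_iterP_le hT.measurable (μs n)
    (fun h => by simpa using hFsub n h) hm
  have hN : (0 : ℝ) < #(F n) := by exact_mod_cast (hFne n).card_pos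
  have hm' : (0 : ℝ) < m := by exact_mod_cast hm
  have hbd : (0 : ℝ) ≤ m * #(natBdFinset (F n)) * log #P := by
    have := log_natCast_nonneg #P
    positivity
  have hlhs (A c L : ℝ) :
      A / #(F n) - 3 * m * (c / #(F n)) * L = (A - 3 * (m * c * L)) / #(F n) := by
    ring
  rw [ncard_natBd, hlhs, div_le_div_iff₀ hN hm']
  nlinarith [mul_nonneg hm'.le hbd]

/-- Misiurewicz-type estimate: for every finite Borel partition `P` and `m ≥ 1`,
`(1/m) H_{μₙ^{Fₙ}}(P^m) ≥ (1/#Fₙ) H_{μₙ}(P^{Fₙ}) − 3m (#∂Fₙ/#Fₙ) log #P`. -/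
theorem stmt5 {X : Type*} [TopologicalSpace X] [CompactSpace X]
    [TopologicalSpace.MetrizableSpace X] [MeasurableSpace X] [BorelSpace X]
    (T : X → X) (hT : Continuous T)
    (𝔫 : ℕ → ℕ) (h𝔫 : StrictMono 𝔫)
    (F : ℕ → Finset ℕ) (hFsub : ∀ k, F k ⊆ Finset.Icc 1 (𝔫 k)) (hFne : ∀ k, (F k).Nonempty)
    (μs : ℕ → Measure X) (hμs : ∀ k, IsProbabilityMeasure (μs k))
    (P : Finset (Set X)) (hP : IsFinPartition P)
    (m : ℕ) (hm : 1 ≤ m) :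
    ∀ k : ℕ,
      statEnt (μs k) (iterP T P (F k)) / ((F k).card : ℝ)
        - 3 * (m : ℝ) * (((natBd ((F k) : Set ℕ)).ncard : ℝ) / ((F k).card : ℝ))
            * Real.log (P.card : ℝ)
      ≤ statEnt (empMeas T (μs k) (F k)) (iterP T P (Finset.range m)) / (m : ℝ) :=
  stmt5_general T hT 𝔫 F hFsub hFne μs hμs P hP m hm
end

section
/- Fix an integer r ≥ 2 and let γ : [−1,1] → ℝ² be a C^r bounded curve with ‖dγ‖_∞ > 0. Let t* ∈ [−1,1] satisfy ‖dγ(t*)‖ = ‖dγ‖_∞. Then for every s ∈ [−1,1] the vectors dγ(t*) and dγ(s) are nonzero and the angle between dγ(t*) and dγ(s) is at most π/6. -/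
/-- `‖d^sγ‖_∞`: sup over `[-1,1]` of the norm of the `s`-th derivative of `γ` on `[-1,1]`. -/
noncomputable def dnorm (γ : ℝ → EuclideanSpace ℝ (Fin 2)) (s : ℕ) : ℝ :=
  ⨆ t : Set.Icc (-1 : ℝ) 1, ‖iteratedDerivWithin s γ (Set.Icc (-1 : ℝ) 1) t‖

/-- A `C^r` curve `γ : [-1,1] → ℝ²` is bounded if `max_{2 ≤ s ≤ r} ‖d^sγ‖_∞ ≤ (1/6)‖dγ‖_∞`. -/
def IsBddCurve (r : ℕ) (γ : ℝ → EuclideanSpace ℝ (Fin 2)) : Prop :=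
  ∀ s : ℕ, 2 ≤ s → s ≤ r → dnorm γ s ≤ (1 / 6) * dnorm γ 1

/-!
The second derivative is at most `‖dγ‖_∞ / 6`, so by the mean value inequality `dγ(s)` lies
within `2 · ‖dγ‖_∞ / 6 = ‖dγ(t*)‖ / 3` of `dγ(t*)`. A vector `v` with `‖u - v‖ ≤ ‖u‖ sin θ`
makes an angle at most `θ` with `u`, and `1/3 ≤ sin (π/6)`.
-/

theorem InnerProductGeometry.angle_le_of_norm_sub_le_mul_sin {E : Type*}
    [NormedAddCommGroup E] [InnerProductSpace ℝ E] {u v : E} (hu : u ≠ 0) (hv : v ≠ 0)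
    {θ : ℝ} (hθ : θ ∈ Set.Icc 0 Real.pi) (h : ‖u - v‖ ≤ ‖u‖ * Real.sin θ) :
    angle u v ≤ θ := by
  have hsin : 0 ≤ Real.sin θ := Real.sin_nonneg_of_nonneg_of_le_pi hθ.1 hθ.2
  have hsq : ‖u - v‖ ^ 2 ≤ (‖u‖ * Real.sin θ) ^ 2 := by gcongr
  -- `2⟪u, v⟫ ≥ ‖u‖² cos² θ + ‖v‖² ≥ 2 ‖u‖ ‖v‖ cos θ`
  have hinner : Real.cos θ * (‖u‖ * ‖v‖) ≤ inner ℝ u v := by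
    rw [norm_sub_sq_real] at hsq
    nlinarith [Real.sin_sq_add_cos_sq θ, sq_nonneg (‖u‖ * Real.cos θ - ‖v‖)]
  have hcos : Real.cos θ ≤ Real.cos (angle u v) := by
    rw [← cos_angle_mul_norm_mul_norm] at hinner
    exact le_of_mul_le_mul_right hinner (by positivity)
  exact (Real.strictAntiOn_cos.le_iff_ge hθ ⟨angle_nonneg u v, angle_le_pi u v⟩).mp hcos

section BoundedCurve

variable {γ : ℝ → EuclideanSpace ℝ (Fin 2)} {r : ℕ}

theorem norm_iteratedDerivWithin_le_dnorm (hγ : ContDiffOn ℝ r γ (Set.Icc (-1 : ℝ) 1))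
    {k : ℕ} (hk : k ≤ r) {t : ℝ} (ht : t ∈ Set.Icc (-1 : ℝ) 1) :
    ‖iteratedDerivWithin k γ (Set.Icc (-1 : ℝ) 1) t‖ ≤ dnorm γ k := by
  have hcont : ContinuousOn (iteratedDerivWithin k γ (Set.Icc (-1 : ℝ) 1)) (Set.Icc (-1) 1) :=
    hγ.continuousOn_iteratedDerivWithin (by exact_mod_cast hk) (uniqueDiffOn_Icc (by norm_num))
  have hbdd : BddAbove
      (Set.range fun t : Set.Icc (-1 : ℝ) 1 => ‖iteratedDerivWithin k γ (Set.Icc (-1) 1) t‖) := by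
    obtain ⟨C, hC⟩ := (isCompact_Icc.image_of_continuousOn hcont.norm).bddAbove
    exact ⟨C, by rintro _ ⟨t, rfl⟩; exact hC ⟨t, t.2, rfl⟩⟩
  exact le_ciSup hbdd ⟨t, ht⟩

theorem norm_derivWithin_sub_le_two_mul_dnorm_two (hr : 2 ≤ r)
    (hγ : ContDiffOn ℝ r γ (Set.Icc (-1 : ℝ) 1)) {s t : ℝ}
    (hs : s ∈ Set.Icc (-1 : ℝ) 1) (ht : t ∈ Set.Icc (-1 : ℝ) 1) :
    ‖iteratedDerivWithin 1 γ (Set.Icc (-1 : ℝ) 1) t - iteratedDerivWithin 1 γ (Set.Icc (-1) 1) s‖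
      ≤ 2 * dnorm γ 2 := by
  have hdiff : DifferentiableOn ℝ (iteratedDerivWithin 1 γ (Set.Icc (-1 : ℝ) 1)) (Set.Icc (-1) 1) :=
    hγ.differentiableOn_iteratedDerivWithin (by exact_mod_cast hr) (uniqueDiffOn_Icc (by norm_num))
  have hmvt := (convex_Icc (-1 : ℝ) 1).norm_image_sub_le_of_norm_derivWithin_le hdiff
    (fun x hx => by
      rw [← iteratedDerivWithin_succ]
      exact norm_iteratedDerivWithin_le_dnorm hγ hr hx) hs ht
  have hst : ‖t - s‖ ≤ 2 := by
    rw [Real.norm_eq_abs, abs_le]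
    constructor <;> linarith [hs.1, hs.2, ht.1, ht.2]
  nlinarith [(norm_nonneg _).trans (norm_iteratedDerivWithin_le_dnorm hγ hr hs)]

end BoundedCurve

/-- The projective component of a bounded curve oscillates slowly: if
`‖dγ(t*)‖ = ‖dγ‖_∞ > 0` then for every `s ∈ [-1,1]` the derivatives `dγ(t*)` and `dγ(s)`
are nonzero and the angle between them is at most `π/6`. -/
theorem stmt9 (r : ℕ) (hr : 2 ≤ r) (γ : ℝ → EuclideanSpace ℝ (Fin 2))
    (hsm : ContDiffOn ℝ r γ (Set.Icc (-1 : ℝ) 1)) (hbdd : IsBddCurve r γ)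
    (hpos : 0 < dnorm γ 1)
    (tstar : ℝ) (htstar : tstar ∈ Set.Icc (-1 : ℝ) 1)
    (hmax : ‖iteratedDerivWithin 1 γ (Set.Icc (-1 : ℝ) 1) tstar‖ = dnorm γ 1) :
    ∀ s ∈ Set.Icc (-1 : ℝ) 1,
      iteratedDerivWithin 1 γ (Set.Icc (-1 : ℝ) 1) tstar ≠ 0 ∧
      iteratedDerivWithin 1 γ (Set.Icc (-1 : ℝ) 1) s ≠ 0 ∧
      InnerProductGeometry.angle (iteratedDerivWithin 1 γ (Set.Icc (-1 : ℝ) 1) tstar)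
        (iteratedDerivWithin 1 γ (Set.Icc (-1 : ℝ) 1) s) ≤ Real.pi / 6 := by
  intro s hs
  set u := iteratedDerivWithin 1 γ (Set.Icc (-1 : ℝ) 1) tstar
  set v := iteratedDerivWithin 1 γ (Set.Icc (-1 : ℝ) 1) s
  have hclose : ‖u - v‖ ≤ ‖u‖ / 3 := by
    linarith [norm_derivWithin_sub_le_two_mul_dnorm_two hr hsm hs htstar, hbdd 2 le_rfl hr]
  have hu : u ≠ 0 := norm_pos_iff.mp (hmax ▸ hpos)
  have hv : v ≠ 0 := by
    rintro hv
    rw [hv, sub_zero] at hclose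
    linarith [norm_pos_iff.mpr hu]
  refine ⟨hu, hv, InnerProductGeometry.angle_le_of_norm_sub_le_mul_sin hu hv
    ⟨by positivity, by linarith [Real.pi_pos]⟩ ?_⟩
  rw [Real.sin_pi_div_six]
  linarith [norm_nonneg u]
end

section
/- Fix an integer r ≥ 2 and ε > 0, and let γ : [−1,1] → ℝ² be a C^r bounded curve with ‖dγ‖_∞ ≥ ε. Then there exist finite disjoint index sets L̲ and L̄, and affine maps ι_j : [−1,1] → [−1,1] for j ∈ L := L̲ ∪ L̄, such that: (i) for each j ∈ L, γ∘ι_j is strongly ε-bounded and ‖d(γ∘ι_j)(0)‖ ≥ ε/6; (ii) [−1,1] is the union of ⋃_{j∈L̲} ι_j([−1,1]) and ⋃_{j∈L̄} ι_j([−1/3,1/3]); (iii) #L̲ ≤ 2 and #L̄ ≤ 6(‖dγ‖_∞/ε + 1); (iv) for every x in the image of γ, #{j ∈ L : image(γ∘ι_j) ∩ B(x,ε) ≠ ∅} ≤ 100, where B(x,ε) is the open ball of radius ε around x. -/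
/-- A curve is strongly `ε`-bounded if it is bounded and `‖dγ‖_∞ ≤ ε`. -/
def IsStrongBddCurve (r : ℕ) (ε : ℝ) (γ : ℝ → EuclideanSpace ℝ (Fin 2)) : Prop :=
  IsBddCurve r γ ∧ dnorm γ 1 ≤ ε

open Set

theorem iteratedDerivWithin_comp_mul_add {𝕜 F : Type*} [NontriviallyNormedField 𝕜]
    [NormedAddCommGroup F] [NormedSpace 𝕜 F] {f : 𝕜 → F} {s t : Set 𝕜} {n : ℕ}
    (hf : ContDiffOn 𝕜 n f t) (hs : UniqueDiffOn 𝕜 s) (ht : UniqueDiffOn 𝕜 t) {c d : 𝕜}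
    (hst : MapsTo (fun x => c * x + d) s t) {x : 𝕜} (hx : x ∈ s) :
    iteratedDerivWithin n (fun x => f (c * x + d)) s x =
      c ^ n • iteratedDerivWithin n f t (c * x + d) := by
  induction n generalizing x with
  | zero => simp
  | succ n ih =>
    have h₀ : s.EqOn (iteratedDerivWithin n (fun x => f (c * x + d)) s)
        (fun x => c ^ n • iteratedDerivWithin n f t (c * x + d)) :=
      fun x hx => ih hf.of_succ hx
    have h₁ : DifferentiableWithinAt 𝕜 (iteratedDerivWithin n f t) t (c * x + d) :=
      hf.differentiableOn_iteratedDerivWithin (Nat.cast_lt.mpr n.lt_succ_self) ht _ (hst hx)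
    have h₂ : HasDerivWithinAt (fun x => c * x + d) c s x := by
      simpa using ((hasDerivWithinAt_id x s).const_mul c).add_const d
    rw [iteratedDerivWithin_succ, derivWithin_congr h₀ (ih hf.of_succ hx),
      iteratedDerivWithin_succ, pow_succ, ← smul_smul]
    exact ((h₁.hasDerivWithinAt.scomp_of_eq x h₂ hst rfl).const_smul (c ^ n)).derivWithin
      (hs x hx)

theorem Convex.sub_mul_norm_sub_le_norm_image_sub {E : Type*} [NormedAddCommGroup E]
    [NormedSpace ℝ E] {f f' : ℝ → E} {s : Set ℝ} (hf : ∀ x ∈ s, HasDerivWithinAt f (f' x) s x)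
    {v : E} {δ : ℝ} (hδ : ∀ x ∈ s, ‖f' x - v‖ ≤ δ) (hs : Convex ℝ s) {x y : ℝ} (hx : x ∈ s)
    (hy : y ∈ s) :
    (‖v‖ - δ) * ‖y - x‖ ≤ ‖f y - f x‖ := by
  have hg : ∀ z ∈ s, HasDerivWithinAt (fun z => f z - z • v) (f' z - v) s z := fun z hz => by
    have := (hf z hz).sub ((hasDerivWithinAt_id z s).smul_const v)
    rwa [one_smul] at this
  have key := Convex.norm_image_sub_le_of_norm_hasDerivWithin_le hg hδ hs hx hy
  calc (‖v‖ - δ) * ‖y - x‖ = ‖(f y - f x) - (f y - y • v - (f x - x • v))‖ - δ * ‖y - x‖ := by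
        rw [show f y - f x - (f y - y • v - (f x - x • v)) = (y - x) • v by rw [sub_smul]; abel,
          norm_smul]
        ring
    _ ≤ ‖f y - f x‖ := by linarith [norm_sub_le (f y - f x) (f y - y • v - (f x - x • v))]

local notation "I" => Icc (-1 : ℝ) 1

theorem uniqueDiffOn_Icc_neg_one_one : UniqueDiffOn ℝ I := uniqueDiffOn_Icc (by norm_num)

section dnorm

variable {γ : ℝ → EuclideanSpace ℝ (Fin 2)} {n : WithTop ℕ∞} {s : ℕ}

theorem dnorm_nonneg : 0 ≤ dnorm γ s := Real.iSup_nonneg fun _ => norm_nonneg _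

theorem dnorm_le {C : ℝ} (h : ∀ t ∈ I, ‖iteratedDerivWithin s γ I t‖ ≤ C) : dnorm γ s ≤ C :=
  have : Nonempty I := (nonempty_Icc.2 (by norm_num)).to_subtype
  ciSup_le fun t => h t t.2

theorem exists_norm_iteratedDerivWithin_eq_dnorm (hγ : ContDiffOn ℝ n γ I) (hs : s ≤ n) :
    ∃ t₀ ∈ I, ‖iteratedDerivWithin s γ I t₀‖ = dnorm γ s ∧
      ∀ t ∈ I, ‖iteratedDerivWithin s γ I t‖ ≤ dnorm γ s := by
  obtain ⟨t₀, ht₀, hmax⟩ := isCompact_Icc.exists_isMaxOn (nonempty_Icc.2 (by norm_num))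
    (hγ.continuousOn_iteratedDerivWithin hs uniqueDiffOn_Icc_neg_one_one).norm
  have hbdd : BddAbove (range fun t : I => ‖iteratedDerivWithin s γ I t‖) :=
    ⟨_, forall_mem_range.2 fun t => hmax t.2⟩
  have heq : ‖iteratedDerivWithin s γ I t₀‖ = dnorm γ s :=
    le_antisymm (le_ciSup hbdd ⟨t₀, ht₀⟩) (dnorm_le fun t ht => hmax ht)
  exact ⟨t₀, ht₀, heq, fun t ht => heq ▸ hmax ht⟩

theorem norm_iteratedDerivWithin_le_dnorm_s11 (hγ : ContDiffOn ℝ n γ I) (hs : s ≤ n) {t : ℝ}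
    (ht : t ∈ I) : ‖iteratedDerivWithin s γ I t‖ ≤ dnorm γ s :=
  (exists_norm_iteratedDerivWithin_eq_dnorm hγ hs).choose_spec.2.2 t ht

end dnorm

section IsBddCurve

variable {r : ℕ} {γ : ℝ → EuclideanSpace ℝ (Fin 2)}

theorem abs_sub_le_two_of_mem_Icc {s t : ℝ} (hs : s ∈ I) (ht : t ∈ I) : |s - t| ≤ 2 :=
  abs_le.2 ⟨by linarith [hs.1, ht.2], by linarith [hs.2, ht.1]⟩

theorem IsBddCurve.exists_norm_deriv_sub_le (hbdd : IsBddCurve r γ) (hr : 2 ≤ r)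
    (hγ : ContDiffOn ℝ r γ I) :
    ∃ t₀ ∈ I, ‖iteratedDerivWithin 1 γ I t₀‖ = dnorm γ 1 ∧
      ∀ t ∈ I, ‖iteratedDerivWithin 1 γ I t - iteratedDerivWithin 1 γ I t₀‖ ≤ dnorm γ 1 / 3 := by
  obtain ⟨t₀, ht₀, hmax, -⟩ :=
    exists_norm_iteratedDerivWithin_eq_dnorm (s := 1) hγ (by exact_mod_cast (by omega : 1 ≤ r))
  have hdiff : DifferentiableOn ℝ (iteratedDerivWithin 1 γ I) I :=
    hγ.differentiableOn_iteratedDerivWithin (by exact_mod_cast (by omega : 1 < r))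
      uniqueDiffOn_Icc_neg_one_one
  have hsecond : ∀ t ∈ I, ‖derivWithin (iteratedDerivWithin 1 γ I) I t‖ ≤ dnorm γ 1 / 6 := by
    intro t ht
    rw [← iteratedDerivWithin_succ]
    linarith [norm_iteratedDerivWithin_le_dnorm_s11 hγ (by exact_mod_cast hr) ht, hbdd 2 le_rfl hr]
  refine ⟨t₀, ht₀, hmax, fun t ht => ?_⟩
  calc _ ≤ dnorm γ 1 / 6 * ‖t - t₀‖ :=
        Convex.norm_image_sub_le_of_norm_derivWithin_le hdiff hsecond (convex_Icc _ _) ht₀ ht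
    _ ≤ dnorm γ 1 / 6 * 2 := by
        have := dnorm_nonneg (γ := γ) (s := 1)
        gcongr
        exact abs_sub_le_two_of_mem_Icc ht ht₀
    _ = dnorm γ 1 / 3 := by ring

theorem IsBddCurve.two_thirds_mul_le_norm_deriv (hbdd : IsBddCurve r γ) (hr : 2 ≤ r)
    (hγ : ContDiffOn ℝ r γ I) {t : ℝ} (ht : t ∈ I) :
    2 / 3 * dnorm γ 1 ≤ ‖iteratedDerivWithin 1 γ I t‖ := by
  obtain ⟨t₀, -, hmax, hclose⟩ := hbdd.exists_norm_deriv_sub_le hr hγ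
  have := norm_sub_norm_le (iteratedDerivWithin 1 γ I t₀) (iteratedDerivWithin 1 γ I t)
  rw [norm_sub_rev] at this
  linarith [hclose t ht]

theorem IsBddCurve.two_thirds_mul_abs_sub_le_norm_sub (hbdd : IsBddCurve r γ) (hr : 2 ≤ r)
    (hγ : ContDiffOn ℝ r γ I) {u v : ℝ} (hu : u ∈ I) (hv : v ∈ I) :
    2 / 3 * dnorm γ 1 * |u - v| ≤ ‖γ u - γ v‖ := by
  obtain ⟨t₀, -, hmax, hclose⟩ := hbdd.exists_norm_deriv_sub_le hr hγ
  have hderiv : ∀ t ∈ I, HasDerivWithinAt γ (iteratedDerivWithin 1 γ I t) I t := fun t ht => by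
    rw [iteratedDerivWithin_one]
    exact (hγ.differentiableOn (by exact_mod_cast (by omega : r ≠ 0)) t ht).hasDerivWithinAt
  have := Convex.sub_mul_norm_sub_le_norm_image_sub hderiv hclose (convex_Icc _ _) hv hu
  rw [hmax, Real.norm_eq_abs] at this
  linarith

end IsBddCurve

section comp_mul_add

variable {r : ℕ} {γ : ℝ → EuclideanSpace ℝ (Fin 2)} {c d : ℝ}

theorem mapsTo_mul_add_Icc (hc : 0 ≤ c) (hd : d ∈ Icc (-1 + c) (1 - c)) :
    MapsTo (fun t => c * t + d) I I := fun t ht =>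
  ⟨by nlinarith [ht.1, ht.2, hd.1], by nlinarith [ht.1, ht.2, hd.2]⟩

theorem norm_iteratedDerivWithin_comp_mul_add {n : WithTop ℕ∞} (hγ : ContDiffOn ℝ n γ I)
    (hc : 0 ≤ c) (hmap : MapsTo (fun t => c * t + d) I I) {s : ℕ} (hs : s ≤ n) {t : ℝ}
    (ht : t ∈ I) :
    ‖iteratedDerivWithin s (fun t => γ (c * t + d)) I t‖ =
      c ^ s * ‖iteratedDerivWithin s γ I (c * t + d)‖ := by
  rw [iteratedDerivWithin_comp_mul_add (hγ.of_le hs) uniqueDiffOn_Icc_neg_one_one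
    uniqueDiffOn_Icc_neg_one_one hmap ht, norm_smul, Real.norm_of_nonneg (pow_nonneg hc s)]

theorem dnorm_comp_mul_add_le {n : WithTop ℕ∞} (hγ : ContDiffOn ℝ n γ I) (hc : 0 ≤ c)
    (hmap : MapsTo (fun t => c * t + d) I I) {s : ℕ} (hs : s ≤ n) :
    dnorm (fun t => γ (c * t + d)) s ≤ c ^ s * dnorm γ s :=
  dnorm_le fun t ht => by
    rw [norm_iteratedDerivWithin_comp_mul_add hγ hc hmap hs ht]
    gcongr
    exact norm_iteratedDerivWithin_le_dnorm_s11 hγ hs (hmap ht)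

theorem IsBddCurve.two_thirds_mul_le_norm_deriv_comp_mul_add (hbdd : IsBddCurve r γ)
    (hr : 2 ≤ r) (hγ : ContDiffOn ℝ r γ I) (hc : 0 ≤ c)
    (hmap : MapsTo (fun t => c * t + d) I I) :
    2 / 3 * (c * dnorm γ 1) ≤ ‖iteratedDerivWithin 1 (fun t => γ (c * t + d)) I 0‖ := by
  have h0 : (0 : ℝ) ∈ I := by norm_num
  rw [norm_iteratedDerivWithin_comp_mul_add hγ hc hmap (by exact_mod_cast (by omega : 1 ≤ r)) h0,
    pow_one]
  have := hbdd.two_thirds_mul_le_norm_deriv hr hγ (hmap h0)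
  nlinarith

theorem IsBddCurve.comp_mul_add (hbdd : IsBddCurve r γ) (hr : 2 ≤ r) (hγ : ContDiffOn ℝ r γ I)
    (hc : 0 ≤ c) (hc' : c ≤ 2 / 3) (hmap : MapsTo (fun t => c * t + d) I I) :
    IsBddCurve r (fun t => γ (c * t + d)) := by
  have hΓ : ContDiffOn ℝ r (fun t => γ (c * t + d)) I :=
    hγ.comp (by fun_prop : ContDiff ℝ r fun t : ℝ => c * t + d).contDiffOn hmap
  have hM := dnorm_nonneg (γ := γ) (s := 1)
  intro s hs hsr
  calc dnorm (fun t => γ (c * t + d)) s ≤ c ^ s * dnorm γ s :=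
        dnorm_comp_mul_add_le hγ hc hmap (by exact_mod_cast hsr)
    _ ≤ c ^ 2 * (1 / 6 * dnorm γ 1) :=
        mul_le_mul (pow_le_pow_of_le_one hc (by linarith) hs) (hbdd s hs hsr) dnorm_nonneg
          (by positivity)
    _ ≤ 1 / 6 * (2 / 3 * (c * dnorm γ 1)) := by
        have : c ^ 2 ≤ 2 / 3 * c := by nlinarith
        nlinarith [mul_le_mul_of_nonneg_right this hM]
    _ ≤ 1 / 6 * dnorm (fun t => γ (c * t + d)) 1 := by
        gcongr
        exact (hbdd.two_thirds_mul_le_norm_deriv_comp_mul_add hr hγ hc hmap).trans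
          (norm_iteratedDerivWithin_le_dnorm_s11 hΓ (by exact_mod_cast (by omega : 1 ≤ r))
            (by norm_num))

theorem IsBddCurve.isStrongBddCurve_comp_mul_add {ε : ℝ} (hbdd : IsBddCurve r γ) (hr : 2 ≤ r)
    (hγ : ContDiffOn ℝ r γ I) (hc : 0 ≤ c) (hc' : c ≤ 2 / 3) (hcε : c * dnorm γ 1 ≤ ε)
    (hmap : MapsTo (fun t => c * t + d) I I) :
    IsStrongBddCurve r ε (fun t => γ (c * t + d)) :=
  ⟨hbdd.comp_mul_add hr hγ hc hc' hmap,
    ((dnorm_comp_mul_add_le hγ hc hmap (by exact_mod_cast (by omega : 1 ≤ r))).trans_eq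
      (by rw [pow_one])).trans hcε⟩

theorem IsBddCurve.abs_sub_lt_of_norm_sub_lt {ε : ℝ} (hbdd : IsBddCurve r γ) (hr : 2 ≤ r)
    (hγ : ContDiffOn ℝ r γ I) (hc : 0 ≤ c) (hεc : ε ≤ 4 * (c * dnorm γ 1))
    (hmap : MapsTo (fun t => c * t + d) I I) {t u : ℝ} (ht : t ∈ I) (hu : u ∈ I)
    (hlt : ‖γ (c * t + d) - γ u‖ < ε) :
    |d - u| < 7 * c := by
  have hbilip := hbdd.two_thirds_mul_abs_sub_le_norm_sub hr hγ (hmap ht) hu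
  have hpos : 0 < c * dnorm γ 1 := by linarith [norm_nonneg (γ (c * t + d) - γ u)]
  have hnear : |c * t + d - u| < 6 * c := by
    by_contra! h
    nlinarith [dnorm_nonneg (γ := γ) (s := 1)]
  have hct : |c * t| ≤ c := by
    rw [abs_mul, abs_of_nonneg hc]
    exact mul_le_of_le_one_right hc (abs_le.2 ⟨ht.1, ht.2⟩)
  calc |d - u| = |(c * t + d - u) - c * t| := by ring_nf
    _ ≤ |c * t + d - u| + |c * t| := abs_sub _ _
    _ < 7 * c := by linarith

end comp_mul_add

theorem Finset.card_le_floor_add_one_of_separated {S : Finset ℕ} {f : ℕ → ℝ} {w R y : ℝ}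
    (hw : 0 < w) (hsep : ∀ i ∈ S, ∀ j ∈ S, w * ((i : ℝ) - j) ≤ |f i - f j|)
    (hR : ∀ j ∈ S, |f j - y| < R) : S.card ≤ ⌊2 * R / w⌋₊ + 1 := by
  rcases S.eq_empty_or_nonempty with rfl | hne
  · simp
  set m := S.min' hne
  have hsub : S ⊆ Finset.Icc m (m + ⌊2 * R / w⌋₊) := fun j hj => by
    have hmj : m ≤ j := S.min'_le j hj
    have hdist : w * ((j : ℝ) - m) < 2 * R := by
      calc w * ((j : ℝ) - m) ≤ |f j - f m| := hsep j hj m (S.min'_mem hne)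
        _ ≤ |f j - y| + |f m - y| := (abs_sub_le _ y _).trans_eq (by rw [abs_sub_comm y])
        _ < 2 * R := by linarith [hR j hj, hR m (S.min'_mem hne)]
    have : j - m ≤ ⌊2 * R / w⌋₊ :=
      Nat.le_floor (by rw [Nat.cast_sub hmj, le_div_iff₀ hw]; linarith)
    exact Finset.mem_Icc.2 ⟨hmj, by omega⟩
  exact (Finset.card_le_card hsub).trans (by rw [Nat.card_Icc]; omega)

/-- The centres of the two end pieces, then the midpoints of the subdivision of `[-1 + 2c, 1 - 2c]`
into pieces of width `w`. -/
noncomputable def centers (c w : ℝ) : ℕ → ℝ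
  | 0 => -1 + c
  | 1 => 1 - c
  | k + 2 => -1 + 2 * c + w * (k + 1 / 2)

section centers

variable {c w : ℝ} {K : ℕ}

theorem centers_mem_Icc (hc : 0 ≤ c) (hw : 0 ≤ w) (hK : w * K = 2 - 4 * c) {j : ℕ}
    (hj : j < K + 2) : centers c w j ∈ Icc (-1 + c) (1 - c) := by
  have hc' : c ≤ 1 / 2 := by nlinarith [mul_nonneg hw (Nat.cast_nonneg K)]
  match j with
  | 0 => exact ⟨le_rfl, by simp only [centers]; linarith⟩
  | 1 => exact ⟨by simp only [centers]; linarith, le_rfl⟩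
  | k + 2 =>
    have hk : (k : ℝ) + 1 ≤ K := by exact_mod_cast (by omega : k + 1 ≤ K)
    have : w * (k + 1 / 2) ≤ w * K := by gcongr; linarith
    exact ⟨by simp only [centers]; nlinarith, by simp only [centers]; linarith⟩

theorem Icc_subset_iUnion_centers (hc : 0 < c) (hw : 0 < w) (hwc : w ≤ 2 * c / 3)
    (hK : w * K = 2 - 4 * c) :
    I ⊆ (⋃ j ∈ ({0, 1} : Finset ℕ), (fun t => c * t + centers c w j) '' I) ∪
      ⋃ j ∈ Finset.Ico 2 (K + 2),
        (fun t => c * t + centers c w j) '' Icc (-(1 / 3)) (1 / 3) := by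
  intro x hx
  simp only [mem_union, mem_iUnion, image_affine_Icc' hc, mem_Icc, Finset.mem_insert,
    Finset.mem_singleton, Finset.mem_Ico, exists_prop]
  by_cases hleft : x ≤ -1 + 2 * c
  · exact .inl ⟨0, .inl rfl, by simp only [centers]; constructor <;> linarith [hx.1]⟩
  by_cases hright : 1 - 2 * c ≤ x
  · exact .inl ⟨1, .inr rfl, by simp only [centers]; constructor <;> linarith [hx.2]⟩
  push Not at hleft hright
  set k := ⌊(x - (-1 + 2 * c)) / w⌋₊
  have hk : (k : ℝ) * w ≤ x - (-1 + 2 * c) :=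
    (le_div_iff₀ hw).1 (Nat.floor_le (div_nonneg (by linarith) hw.le))
  have hk' : x - (-1 + 2 * c) < (k + 1) * w :=
    (div_lt_iff₀ hw).1 (Nat.lt_floor_add_one _)
  have hkK : k < K := by
    have : (k : ℝ) * w < K * w := by linarith
    exact_mod_cast lt_of_mul_lt_mul_right this hw.le
  refine .inr ⟨k + 2, ⟨by omega, by omega⟩, ?_⟩
  simp only [centers]
  constructor <;> nlinarith

theorem card_filter_le_of_abs_centers_sub_lt {P : ℕ → Prop} [DecidablePred P] (hc : 0 < c)
    (hw : c / 4 ≤ w) {u : ℝ}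
    (hP : ∀ j ∈ Finset.Ico 2 (K + 2), P j → |centers c w j - u| < 7 * c) :
    ((({0, 1} : Finset ℕ) ∪ Finset.Ico 2 (K + 2)).filter P).card ≤ 59 := by
  have hw0 : 0 < w := by linarith
  have hsep : ∀ i ∈ (Finset.Ico 2 (K + 2)).filter P, ∀ j ∈ (Finset.Ico 2 (K + 2)).filter P,
      w * ((i : ℝ) - j) ≤ |centers c w i - centers c w j| := by
    intro i hi j hj
    obtain ⟨i, rfl⟩ : ∃ k, i = k + 2 := ⟨i - 2, by simp at hi; omega⟩
    obtain ⟨j, rfl⟩ : ∃ k, j = k + 2 := ⟨j - 2, by simp at hj; omega⟩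
    simp only [centers]
    push_cast
    exact (le_of_eq (by ring)).trans (le_abs_self _)
  have hcount := Finset.card_le_floor_add_one_of_separated hw0 hsep
    (fun j hj => hP j (Finset.mem_filter.1 hj).1 (Finset.mem_filter.1 hj).2)
  have hfloor : ⌊2 * (7 * c) / w⌋₊ ≤ 56 :=
    Nat.floor_le_of_le (by rw [div_le_iff₀ hw0]; push_cast; linarith)
  calc _ ≤ (({0, 1} : Finset ℕ).filter P).card + ((Finset.Ico 2 (K + 2)).filter P).card := by
        rw [Finset.filter_union]; exact Finset.card_union_le _ _
    _ ≤ 2 + 57 := by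
        gcongr
        · exact (Finset.card_filter_le _ _).trans (by decide)
        · omega
    _ = 59 := rfl

end centers

theorem exists_slope {ε M : ℝ} (hε : 0 < ε) (hεM : ε ≤ M) :
    ∃ c : ℝ, 0 < c ∧ c ≤ 1 / 4 ∧ ε ≤ 4 * (c * M) ∧ c * M ≤ ε ∧
      (⌈3 / c⌉₊ : ℝ) ≤ 6 * (M / ε + 1) := by
  have hM : 0 < M := hε.trans_le hεM
  have hMε : 1 ≤ M / ε := (one_le_div hε).2 hεM
  rcases le_total M (2 * ε) with h | h
  · refine ⟨1 / 4, by norm_num, le_rfl, by linarith, by linarith, ?_⟩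
    have : ⌈(3 : ℝ) / (1 / 4)⌉₊ = 12 := by norm_num
    rw [this]
    push_cast
    linarith
  · refine ⟨ε / (2 * M), by positivity, ?_, ?_, ?_, ?_⟩
    · rw [div_le_iff₀ (by positivity)]; linarith
    · field_simp; linarith
    · field_simp; linarith
    · have h3c : 3 / (ε / (2 * M)) = 6 * (M / ε) := by field_simp; ring
      linarith [Nat.ceil_lt_add_one (by positivity : 0 ≤ 3 / (ε / (2 * M)))]

theorem exists_width {c : ℝ} (hc : 0 < c) (hc' : c ≤ 1 / 4) :
    ∃ w : ℝ, c / 4 ≤ w ∧ w ≤ 2 * c / 3 ∧ w * ⌈3 / c⌉₊ = 2 - 4 * c := by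
  have hK : 3 / c ≤ ⌈3 / c⌉₊ := Nat.le_ceil _
  have hK' : (⌈3 / c⌉₊ : ℝ) < 3 / c + 1 := Nat.ceil_lt_add_one (by positivity)
  have h3c : 3 / c * c = 3 := div_mul_cancel₀ _ hc.ne'
  have hKpos : (0 : ℝ) < ⌈3 / c⌉₊ := (by positivity : 0 < 3 / c).trans_le hK
  refine ⟨(2 - 4 * c) / ⌈3 / c⌉₊, ?_, ?_, div_mul_cancel₀ _ hKpos.ne'⟩
  · rw [le_div_iff₀ hKpos]; nlinarith
  · rw [div_le_iff₀ hKpos]; nlinarith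

open Classical in
/-- Reparametrization of a bounded curve with `‖dγ‖_∞ ≥ ε` by affine maps
`ι_j(t) = c_j t + d_j` of `[-1,1]`: the reparametrized curves are strongly `ε`-bounded with
derivative at `0` of norm at least `ε/6`, they cover `[-1,1]`, their number is controlled,
and every `ε`-ball meets at most `100` of their images. -/
theorem stmt11 (r : ℕ) (hr : 2 ≤ r) (ε : ℝ) (hε : 0 < ε)
    (γ : ℝ → EuclideanSpace ℝ (Fin 2))
    (hsm : ContDiffOn ℝ r γ (Set.Icc (-1 : ℝ) 1)) (hbdd : IsBddCurve r γ)
    (hlow : ε ≤ dnorm γ 1) :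
    ∃ (L1 L2 : Finset ℕ) (c d : ℕ → ℝ),
      Disjoint L1 L2 ∧
      (∀ j ∈ L1 ∪ L2,
        Set.MapsTo (fun t => c j * t + d j) (Set.Icc (-1 : ℝ) 1) (Set.Icc (-1 : ℝ) 1)) ∧
      (∀ j ∈ L1 ∪ L2,
        IsStrongBddCurve r ε (fun t => γ (c j * t + d j)) ∧
        ε / 6 ≤ ‖iteratedDerivWithin 1 (fun t => γ (c j * t + d j))
          (Set.Icc (-1 : ℝ) 1) 0‖) ∧
      Set.Icc (-1 : ℝ) 1 ⊆
        (⋃ j ∈ L1, (fun t => c j * t + d j) '' Set.Icc (-1 : ℝ) 1) ∪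
        (⋃ j ∈ L2, (fun t => c j * t + d j) '' Set.Icc (-(1 / 3) : ℝ) (1 / 3)) ∧
      L1.card ≤ 2 ∧
      (L2.card : ℝ) ≤ 6 * (dnorm γ 1 / ε + 1) ∧
      ∀ x ∈ γ '' Set.Icc (-1 : ℝ) 1,
        (((L1 ∪ L2).filter (fun j =>
          (((fun t => γ (c j * t + d j)) '' Set.Icc (-1 : ℝ) 1)
            ∩ Metric.ball x ε).Nonempty)).card) ≤ 100 := by
  obtain ⟨c, hc, hc', hεc, hcε, hcount⟩ := exists_slope hε hlow
  obtain ⟨w, hw, hw', hwK⟩ := exists_width hc hc'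
  set K := ⌈3 / c⌉₊
  have hdisj : Disjoint ({0, 1} : Finset ℕ) (Finset.Ico 2 (K + 2)) :=
    Finset.disjoint_left.2 fun j hj hj' => by simp at hj hj'; omega
  have hmaps : ∀ j ∈ ({0, 1} : Finset ℕ) ∪ Finset.Ico 2 (K + 2),
      MapsTo (fun t => c * t + centers c w j) I I := fun j hj =>
    mapsTo_mul_add_Icc hc.le (centers_mem_Icc hc.le (by linarith) hwK (by simp at hj; omega))
  refine ⟨{0, 1}, Finset.Ico 2 (K + 2), fun _ => c, centers c w, hdisj, hmaps,
    fun j hj => ⟨?_, ?_⟩, Icc_subset_iUnion_centers hc (by linarith) hw' hwK, by decide,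
    by simpa using hcount, ?_⟩
  · exact hbdd.isStrongBddCurve_comp_mul_add hr hsm hc.le (by linarith) hcε (hmaps j hj)
  · linarith [hbdd.two_thirds_mul_le_norm_deriv_comp_mul_add hr hsm hc.le (hmaps j hj)]
  · rintro _ ⟨u, hu, rfl⟩
    refine (card_filter_le_of_abs_centers_sub_lt (u := u) hc hw
      fun j hj ⟨_, ⟨t, ht, rfl⟩, hlt⟩ => ?_).trans (by norm_num)
    exact hbdd.abs_sub_lt_of_norm_sub_lt hr hsm hc.le hεc (hmaps j (by simp [hj])) ht hu
      (by rwa [Metric.mem_ball, dist_eq_norm] at hlt)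
end

section
/- Let d ≥ 1 and let (A_n)_{n∈ℕ} be a sequence of d×d real matrices; set A^n = A_{n−1}⋯A_1A_0 for n ≥ 1. Then sup_{v∈ℝ^d∖{0}} limsup_n (1/n) log ‖A^n v‖ = limsup_n (1/n) log ‖A^n‖, where ‖A^n‖ denotes the operator norm, the limsups are taken in [−∞,+∞] with the convention log 0 = −∞; moreover the supremum is attained at some unit vector v. -/
/-!
With the convention `log 0 = -∞`, the limsups in the statement are the upper exponential growth
rates `expGrowthSup` of the sequences `‖Aⁿ v‖` and `‖Aⁿ‖`. Since `‖Aⁿ v‖ ≤ ‖v‖ ‖Aⁿ‖`, no vector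
grows faster than the norms. Conversely, for an orthonormal basis `(eᵢ)` one has
`‖Aⁿ‖ ≤ ∑ᵢ ‖Aⁿ eᵢ‖`, and the growth rate of a finite sum is the maximum of the growth rates, so
some `eᵢ` grows as fast as `‖Aⁿ‖`.
-/

open Filter

/-- Extended-real logarithm with the convention `log 0 = -∞`. -/
noncomputable def elog (x : ℝ) : EReal := if x = 0 then ⊥ else ((Real.log x : ℝ) : EReal)

/-- The product `A^n = A_{n-1} ⋯ A_1 A_0` of a sequence of linear maps of `ℝ^d`. -/
noncomputable def prodCLM {d : ℕ}
    (A : ℕ → (EuclideanSpace ℝ (Fin d) →L[ℝ] EuclideanSpace ℝ (Fin d))) :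
    ℕ → (EuclideanSpace ℝ (Fin d) →L[ℝ] EuclideanSpace ℝ (Fin d))
  | 0 => ContinuousLinearMap.id ℝ (EuclideanSpace ℝ (Fin d))
  | n + 1 => (A n).comp (prodCLM A n)

open ExpGrowth

lemma elog_of_nonneg {x : ℝ} (hx : 0 ≤ x) : elog x = ENNReal.log (ENNReal.ofReal x) := by
  rw [ENNReal.log_ofReal, elog]
  simp only [hx.ge_iff_eq']

lemma limsup_elog_norm_div_eq_expGrowthSup {E : Type*} [SeminormedAddCommGroup E] (u : ℕ → E) :
    limsup (fun n : ℕ => elog ‖u n‖ / (n : EReal)) atTop = expGrowthSup fun n => ‖u n‖ₑ := by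
  simp only [expGrowthSup, elog_of_nonneg (norm_nonneg _), ofReal_norm]

theorem expGrowthSup_apply_le_opENorm {𝕜 E F : Type*} [NontriviallyNormedField 𝕜]
    [SeminormedAddCommGroup E] [NormedSpace 𝕜 E] [SeminormedAddCommGroup F] [NormedSpace 𝕜 F]
    (P : ℕ → E →L[𝕜] F) (v : E) :
    expGrowthSup (fun n => ‖P n v‖ₑ) ≤ expGrowthSup fun n => ‖P n‖ₑ :=
  expGrowthSup_le_of_eventually_le enorm_ne_top
    (.of_forall fun n => (P n).le_opENorm v |>.trans_eq (mul_comm _ _))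

namespace OrthonormalBasis

variable {ι 𝕜 E F : Type*} [Fintype ι] [RCLike 𝕜] [NormedAddCommGroup E] [InnerProductSpace 𝕜 E]
  [SeminormedAddCommGroup F] [NormedSpace 𝕜 F]

theorem opNorm_le_sum (b : OrthonormalBasis ι 𝕜 E) (T : E →L[𝕜] F) :
    ‖T‖ ≤ ∑ i, ‖T (b i)‖ := by
  refine T.opNorm_le_bound (by positivity) fun v => ?_
  calc ‖T v‖ = ‖∑ i, inner 𝕜 (b i) v • T (b i)‖ := by
        conv_lhs => rw [← b.sum_repr' v]
        simp only [map_sum, map_smul]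
  _ ≤ ∑ i, ‖inner 𝕜 (b i) v‖ * ‖T (b i)‖ := (norm_sum_le _ _).trans_eq (by simp only [norm_smul])
  _ ≤ ∑ i, ‖v‖ * ‖T (b i)‖ := by
        gcongr with i
        simpa [b.orthonormal.1 i] using norm_inner_le_norm (𝕜 := 𝕜) (b i) v
  _ = (∑ i, ‖T (b i)‖) * ‖v‖ := by rw [← Finset.mul_sum, mul_comm]

theorem opENorm_le_sum (b : OrthonormalBasis ι 𝕜 E) (T : E →L[𝕜] F) :
    ‖T‖ₑ ≤ ∑ i, ‖T (b i)‖ₑ := by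
  simp only [← ofReal_norm]
  rw [← ENNReal.ofReal_sum_of_nonneg fun i _ => norm_nonneg _]
  exact ENNReal.ofReal_le_ofReal (b.opNorm_le_sum T)

theorem exists_expGrowthSup_apply_eq_opENorm [Nonempty ι] (b : OrthonormalBasis ι 𝕜 E)
    (P : ℕ → E →L[𝕜] F) :
    ∃ i, expGrowthSup (fun n => ‖P n (b i)‖ₑ) = expGrowthSup fun n => ‖P n‖ₑ := by
  obtain ⟨i, hi⟩ := exists_eq_ciSup_of_finite (f := fun i => expGrowthSup fun n => ‖P n (b i)‖ₑ)
  refine ⟨i, le_antisymm (expGrowthSup_apply_le_opENorm P (b i)) ?_⟩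
  calc expGrowthSup (fun n => ‖P n‖ₑ) ≤ expGrowthSup (∑ i, fun n => ‖P n (b i)‖ₑ) :=
        expGrowthSup_monotone fun n => by simpa using b.opENorm_le_sum (P n)
  _ = expGrowthSup (fun n => ‖P n (b i)‖ₑ) := by
        rw [expGrowthSup_sum, hi]
        simp

end OrthonormalBasis

/-- For a sequence of `d×d` real matrices (acting on Euclidean `ℝ^d`),
`sup_{v ≠ 0} limsup (1/n) log ‖Aⁿ v‖ = limsup (1/n) log ‖Aⁿ‖` (operator norm), with values
in `[-∞,+∞]` and the convention `log 0 = -∞`; moreover the supremum is attained at a unit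
vector. -/
theorem stmt13 (d : ℕ) (hd : 1 ≤ d)
    (A : ℕ → (EuclideanSpace ℝ (Fin d) →L[ℝ] EuclideanSpace ℝ (Fin d))) :
    (⨆ v : {v : EuclideanSpace ℝ (Fin d) // v ≠ 0},
        limsup (fun n : ℕ => elog ‖(prodCLM A n) v.1‖ / (n : EReal)) atTop)
      = limsup (fun n : ℕ => elog ‖prodCLM A n‖ / (n : EReal)) atTop ∧
    ∃ v : EuclideanSpace ℝ (Fin d), ‖v‖ = 1 ∧
      limsup (fun n : ℕ => elog ‖(prodCLM A n) v‖ / (n : EReal)) atTop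
        = limsup (fun n : ℕ => elog ‖prodCLM A n‖ / (n : EReal)) atTop := by
  simp only [limsup_elog_norm_div_eq_expGrowthSup]
  have : Nonempty (Fin d) := ⟨⟨0, hd⟩⟩
  set b := EuclideanSpace.basisFun (Fin d) ℝ
  obtain ⟨i, hi⟩ := b.exists_expGrowthSup_apply_eq_opENorm (prodCLM A)
  refine ⟨le_antisymm (iSup_le fun v => expGrowthSup_apply_le_opENorm _ _) ?_,
    b i, b.orthonormal.1 i, hi⟩
  exact hi ▸ le_iSup_of_le
    (⟨b i, b.orthonormal.ne_zero i⟩ : {v : EuclideanSpace ℝ (Fin d) // v ≠ 0}) le_rfl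
end
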